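/- arXiv:2109.01828 — 9 statements merged into one kernel-verified Lean document; each statement's English description precedes it below -/
import Mathlib

section
/- Let φ ∈ ℝ be an angle that is not an integer multiple of π/2 and that is not exceptional. Then there exist real constants c₅, c₆ > 0 (depending only on φ) and a positive integer M₀ such that for every integer M ≥ M₀ one has c₅·M² ≤ N_φ(M) ≤ c₆·M². -/
/-- The discretized rotation `r_φ : ℤ² → ℤ²`. -/
noncomputable def rphi (φ : ℝ) (p : ℤ × ℤ) : ℤ × ℤ :=
  (⌊(p.1 : ℝ) * Real.cos φ - (p.2 : ℝ) * Real.sin φ⌋,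
   ⌊(p.1 : ℝ) * Real.sin φ + (p.2 : ℝ) * Real.cos φ⌋)

open Classical in
/-- `N_φ(M)`: the number of lattice points `(n,m)` with `|n|,|m| ≤ M` which are images of
no lattice point under `r_φ`. -/
noncomputable def Ncount (φ : ℝ) (M : ℕ) : ℕ :=
  ((Finset.Icc (-(M : ℤ), -(M : ℤ)) ((M : ℤ), (M : ℤ))).filter
    fun nm => ∀ ab : ℤ × ℤ, rphi φ ab ≠ nm).card

/-- `φ` is exceptional if `sin φ` is irrational and at least one of `cos φ - sin φ`,
`cos φ + sin φ` is rational. -/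
def Exceptional (φ : ℝ) : Prop :=
  Irrational (Real.sin φ) ∧
    ((∃ r : ℚ, Real.cos φ - Real.sin φ = (r : ℝ)) ∨
      (∃ r : ℚ, Real.cos φ + Real.sin φ = (r : ℝ)))

open Finset Real MeasureTheory
open scoped ENNReal

/-!
The upper bound is trivial. For the lower bound: as `φ ∉ (π / 2) ℤ`, both `|cos φ|` and `|sin φ|`
are `< 1`, so whenever both coordinates of the rotated point `rot φ p` lie within
`δ = 1 - max |cos φ| |sin φ|` of integers, some neighbour `p ± e₁`, `p ± e₂` has the same image
under `r_φ`. Compactness of the torus `(ℝ / ℤ)²` makes the set of such `p` syndetic, which yields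
`≫ M²` well separated collisions among the points sent into `[-M, M]²`. Since the rotation preserves
area, at most `(2M + 5)²` lattice points are sent into `[-M, M]²`, so the collisions leave `≫ M²` of
its `(2M + 1)²` points unattained.
-/

lemma card_image_add_card_le {α β : Type*} [DecidableEq α] [DecidableEq β] (f : α → β)
    {T W : Finset α} (hWT : W ⊆ T) (h : ∀ w ∈ W, ∃ u ∈ T \ W, f u = f w) :
    #(T.image f) + #W ≤ #T := by
  have himage : T.image f = (T \ W).image f := by
    refine Subset.antisymm (fun y hy => ?_) (image_subset_image sdiff_subset)
    obtain ⟨w, hwT, rfl⟩ := mem_image.mp hy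
    by_cases hwW : w ∈ W
    · obtain ⟨u, hu, hfu⟩ := h w hwW
      exact mem_image.mpr ⟨u, hu, hfu⟩
    · exact mem_image_of_mem f (mem_sdiff.mpr ⟨hwT, hwW⟩)
  calc #(T.image f) + #W ≤ #(T \ W) + #W := by rw [himage]; gcongr; exact card_image_le
    _ = #T := card_sdiff_add_card_eq_card hWT

noncomputable def square (r : ℤ) : Finset (ℤ × ℤ) := Icc (-r, -r) (r, r)

lemma mem_square {r : ℤ} {p : ℤ × ℤ} : p ∈ square r ↔ |p.1| ≤ r ∧ |p.2| ≤ r := by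
  simp only [square, mem_Icc, Prod.le_def, abs_le]
  tauto

lemma card_square (n : ℕ) : #(square n) = (2 * n + 1) ^ 2 := by
  have h : ((n : ℤ) + 1 - -(n : ℤ)).toNat = 2 * n + 1 := by omega
  rw [square, card_Icc_prod]
  simp only [Int.card_Icc, h]
  ring

lemma floor_mem_square_iff {r : ℤ} {x : ℝ × ℝ} :
    (⌊x.1⌋, ⌊x.2⌋) ∈ square r ↔ x ∈ Set.Ico (-r : ℝ) (r + 1) ×ˢ Set.Ico (-r : ℝ) (r + 1) := by
  simp only [square, mem_Icc, Prod.le_def, Set.mem_prod, Set.mem_Ico, Int.le_floor,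
    Int.floor_le_iff]
  push_cast
  tauto

lemma card_square_le_Ncount_add (φ : ℝ) (M : ℕ) {T : Finset (ℤ × ℤ)}
    (hT : ∀ p, rphi φ p ∈ square M → p ∈ T) :
    #(square M) ≤ Ncount φ M + #(T.image (rphi φ)) := by
  classical
  rw [Ncount, ← card_filter_add_card_filter_not (s := square M) (fun nm => ∀ ab, rphi φ ab ≠ nm)]
  gcongr
  · exact le_rfl
  · intro nm hnm
    obtain ⟨hbox, hhit⟩ := mem_filter.mp hnm
    simp only [not_forall, not_not] at hhit
    obtain ⟨ab, rfl⟩ := hhit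
    exact mem_image_of_mem _ (hT ab hbox)

lemma Ncount_le (φ : ℝ) (M : ℕ) : Ncount φ M ≤ (2 * M + 1) ^ 2 := by
  classical
  exact (card_filter_le _ _).trans (card_square M).le

noncomputable def rot (φ : ℝ) : ℝ × ℝ →ₗ[ℝ] ℝ × ℝ :=
  Matrix.toLin (Module.Basis.finTwoProd ℝ) (Module.Basis.finTwoProd ℝ)
    !![cos φ, -sin φ; sin φ, cos φ]

@[simp]
lemma rot_apply (φ : ℝ) (x : ℝ × ℝ) :
    rot φ x = (x.1 * cos φ - x.2 * sin φ, x.1 * sin φ + x.2 * cos φ) := by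
  rw [rot, Matrix.toLin_finTwoProd_apply]
  ext <;> simp only <;> ring

lemma det_rot (φ : ℝ) : LinearMap.det (rot φ) = 1 := by
  rw [rot, LinearMap.det_toLin, Matrix.det_fin_two_of]
  linear_combination cos_sq_add_sin_sq φ

lemma rot_neg_rot (φ : ℝ) (x : ℝ × ℝ) : rot (-φ) (rot φ x) = x := by
  ext <;> simp only [rot_apply, cos_neg, sin_neg]
  · linear_combination x.1 * sin_sq_add_cos_sq φ
  · linear_combination x.2 * sin_sq_add_cos_sq φ

lemma rphi_eq_floor_rot (φ : ℝ) (p : ℤ × ℤ) :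
    rphi φ p = (⌊(rot φ (p.1, p.2)).1⌋, ⌊(rot φ (p.1, p.2)).2⌋) := by
  simp [rphi]

lemma abs_rot_fst_le (φ : ℝ) (x : ℝ × ℝ) : |(rot φ x).1| ≤ |x.1| + |x.2| := by
  rw [rot_apply]
  calc |x.1 * cos φ - x.2 * sin φ| ≤ |x.1| * |cos φ| + |x.2| * |sin φ| := by
        simpa only [abs_mul] using abs_sub (x.1 * cos φ) (x.2 * sin φ)
    _ ≤ |x.1| * 1 + |x.2| * 1 := by gcongr <;> [exact abs_cos_le_one φ; exact abs_sin_le_one φ]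
    _ = |x.1| + |x.2| := by ring

lemma abs_rot_snd_le (φ : ℝ) (x : ℝ × ℝ) : |(rot φ x).2| ≤ |x.1| + |x.2| := by
  rw [rot_apply]
  calc |x.1 * sin φ + x.2 * cos φ| ≤ |x.1| * |sin φ| + |x.2| * |cos φ| := by
        simpa only [abs_mul] using abs_add_le (x.1 * sin φ) (x.2 * cos φ)
    _ ≤ |x.1| * 1 + |x.2| * 1 := by gcongr <;> [exact abs_sin_le_one φ; exact abs_cos_le_one φ]
    _ = |x.1| + |x.2| := by ring

lemma rphi_mem_square_of_abs_le (φ : ℝ) (M : ℕ) {p : ℤ × ℤ}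
    (h₁ : 2 * |p.1| ≤ M) (h₂ : 2 * |p.2| ≤ M) : rphi φ p ∈ square M := by
  have hsum : |(p.1 : ℝ)| + |(p.2 : ℝ)| ≤ M := by
    have h₁' : 2 * |(p.1 : ℝ)| ≤ M := by exact_mod_cast h₁
    have h₂' : 2 * |(p.2 : ℝ)| ≤ M := by exact_mod_cast h₂
    linarith
  have hx := abs_le.mp ((abs_rot_fst_le φ (p.1, p.2)).trans hsum)
  have hy := abs_le.mp ((abs_rot_snd_le φ (p.1, p.2)).trans hsum)
  rw [rphi_eq_floor_rot, floor_mem_square_iff]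
  push_cast
  exact ⟨⟨hx.1, by linarith⟩, ⟨hy.1, by linarith⟩⟩

lemma abs_le_of_rphi_mem_square (φ : ℝ) (M : ℕ) {p : ℤ × ℤ} (hp : rphi φ p ∈ square M) :
    |p.1| ≤ 2 * (M : ℤ) + 2 ∧ |p.2| ≤ 2 * (M : ℤ) + 2 := by
  rw [rphi_eq_floor_rot, floor_mem_square_iff] at hp
  obtain ⟨⟨hx₁, hx₂⟩, ⟨hy₁, hy₂⟩⟩ := hp
  push_cast at hx₁ hx₂ hy₁ hy₂
  have hx : |(rot φ (p.1, p.2)).1| ≤ M + 1 := abs_le.mpr ⟨by linarith, hx₂.le⟩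
  have hy : |(rot φ (p.1, p.2)).2| ≤ M + 1 := abs_le.mpr ⟨by linarith, hy₂.le⟩
  have hsum : |(rot φ (p.1, p.2)).1| + |(rot φ (p.1, p.2)).2| ≤ 2 * (M : ℝ) + 2 := by linarith
  have h1 := (abs_rot_fst_le (-φ) (rot φ (p.1, p.2))).trans hsum
  have h2 := (abs_rot_snd_le (-φ) (rot φ (p.1, p.2))).trans hsum
  rw [rot_neg_rot] at h1 h2
  dsimp only at h1 h2
  exact ⟨by exact_mod_cast h1, by exact_mod_cast h2⟩

def cell (p : ℤ × ℤ) : Set (ℝ × ℝ) := Set.Ico (p.1 : ℝ) (p.1 + 1) ×ˢ Set.Ico (p.2 : ℝ) (p.2 + 1)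

lemma floor_eq_of_mem_cell {p : ℤ × ℤ} {x : ℝ × ℝ} (hx : x ∈ cell p) : (⌊x.1⌋, ⌊x.2⌋) = p := by
  obtain ⟨⟨h1, h2⟩, ⟨h3, h4⟩⟩ := hx
  ext
  · exact Int.floor_eq_iff.mpr ⟨h1, h2⟩
  · exact Int.floor_eq_iff.mpr ⟨h3, h4⟩

lemma volume_cell (p : ℤ × ℤ) : volume (cell p) = 1 := by
  simp [cell, Measure.volume_eq_prod, Measure.prod_prod]

lemma card_le_volume_of_cell_subset {T : Finset (ℤ × ℤ)} {E : Set (ℝ × ℝ)}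
    (h : ∀ p ∈ T, cell p ⊆ E) : (#T : ℝ≥0∞) ≤ volume E := by
  have hdisj : (T : Set (ℤ × ℤ)).PairwiseDisjoint cell := fun p _ q _ hpq =>
    Set.disjoint_left.mpr fun x hxp hxq =>
      hpq ((floor_eq_of_mem_cell hxp).symm.trans (floor_eq_of_mem_cell hxq))
  calc (#T : ℝ≥0∞) = volume (⋃ p ∈ T, cell p) := by
        rw [measure_biUnion_finset hdisj fun p _ => measurableSet_Ico.prod measurableSet_Ico]
        simp [volume_cell]
    _ ≤ volume E := measure_mono (Set.iUnion₂_subset h)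

lemma card_le_of_rphi_mem_square (φ : ℝ) (M : ℕ) {T : Finset (ℤ × ℤ)}
    (hT : ∀ p ∈ T, rphi φ p ∈ square M) : (#T : ℝ) ≤ (2 * M + 5) ^ 2 := by
  set S := Set.Icc (-(M : ℝ) - 2) (M + 3) ×ˢ Set.Icc (-(M : ℝ) - 2) (M + 3)
  have hvol : volume (rot φ ⁻¹' S) = ENNReal.ofReal ((2 * M + 5) ^ 2) := by
    rw [Measure.addHaar_preimage_linearMap _ (by simp [det_rot]), det_rot, Measure.volume_eq_prod,
      Measure.prod_prod, Real.volume_Icc, show (M : ℝ) + 3 - (-M - 2) = 2 * M + 5 by ring,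
      ← ENNReal.ofReal_mul (by positivity)]
    simp [sq]
  have hcell : ∀ p ∈ T, cell p ⊆ rot φ ⁻¹' S := by
    intro p hp x hx
    have hp' := hT p hp
    rw [rphi_eq_floor_rot, floor_mem_square_iff] at hp'
    obtain ⟨⟨hp₁, hp₂⟩, ⟨hp₃, hp₄⟩⟩ := hp'
    obtain ⟨⟨hx₁, hx₂⟩, ⟨hx₃, hx₄⟩⟩ := hx
    have hsmall : |x.1 - p.1| + |x.2 - p.2| ≤ 2 := by
      rw [abs_of_nonneg (by linarith), abs_of_nonneg (by linarith)]
      linarith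
    have hsplit : rot φ x = rot φ (p.1, p.2) + rot φ (x.1 - p.1, x.2 - p.2) := by
      rw [← map_add]
      congr 1
      ext <;> simp
    have h1 := abs_le.mp ((abs_rot_fst_le φ (x.1 - p.1, x.2 - p.2)).trans hsmall)
    have h2 := abs_le.mp ((abs_rot_snd_le φ (x.1 - p.1, x.2 - p.2)).trans hsmall)
    simp only [Set.mem_preimage, hsplit, Prod.fst_add, Prod.snd_add, S, Set.mem_prod,
      Set.mem_Icc]
    push_cast at hp₁ hp₂ hp₃ hp₄
    refine ⟨⟨?_, ?_⟩, ⟨?_, ?_⟩⟩ <;> linarith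
  have h := (card_le_volume_of_cell_subset hcell).trans_eq hvol
  rwa [← ENNReal.ofReal_natCast, ENNReal.ofReal_le_ofReal_iff (by positivity)] at h

lemma card_square_add_card_le_Ncount_add (φ : ℝ) (M : ℕ) {W : Finset (ℤ × ℤ)}
    (hW : ∀ w ∈ W, rphi φ w ∈ square M) (hcol : ∀ w ∈ W, ∃ u ∉ W, rphi φ u = rphi φ w) :
    ((2 * M + 1) ^ 2 + #W : ℝ) ≤ Ncount φ M + (2 * M + 5) ^ 2 := by
  classical
  set T := (square (2 * M + 2)).filter fun p => rphi φ p ∈ square M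
  have hT : ∀ p, rphi φ p ∈ square M → p ∈ T := fun p hp =>
    mem_filter.mpr ⟨mem_square.mpr (abs_le_of_rphi_mem_square φ M hp), hp⟩
  have hWT : W ⊆ T := fun w hw => hT w (hW w hw)
  have hhits := card_square_le_Ncount_add φ M hT
  have hfibres := card_image_add_card_le (rphi φ) hWT fun w hw => by
    obtain ⟨u, hu, hfu⟩ := hcol w hw
    exact ⟨u, mem_sdiff.mpr ⟨hT u (hfu ▸ hW w hw), hu⟩, hfu⟩
  have hvolume := card_le_of_rphi_mem_square φ M (T := T) fun p hp => (mem_filter.mp hp).2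
  rw [card_square] at hhits
  have hhits' : ((2 * M + 1) ^ 2 : ℝ) ≤ Ncount φ M + #(T.image (rphi φ)) := by exact_mod_cast hhits
  have hfibres' : (#(T.image (rphi φ)) + #W : ℝ) ≤ #T := by exact_mod_cast hfibres
  linarith

lemma floor_add_eq_floor {x w δ : ℝ} (hx : |x - round x| < δ) (hw : |w| ≤ 1 - δ)
    (hpos : (round x : ℝ) ≤ x → 0 ≤ w) (hneg : x < round x → w ≤ 0) : ⌊x + w⌋ = ⌊x⌋ := by
  obtain ⟨hx₁, hx₂⟩ := abs_lt.mp hx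
  obtain ⟨hw₁, hw₂⟩ := abs_le.mp hw
  have hδ : δ ≤ 1 := by linarith [abs_nonneg w]
  rcases le_or_gt (round x : ℝ) x with h | h
  · have hw₀ := hpos h
    rw [Int.floor_eq_iff.mpr ⟨h, by linarith⟩, Int.floor_eq_iff.mpr ⟨by linarith, by linarith⟩]
  · have hw₀ := hneg h
    have hfloor : ⌊x⌋ = round x - 1 :=
      Int.floor_eq_iff.mpr ⟨by push_cast; linarith, by push_cast; linarith⟩
    rw [hfloor]
    exact Int.floor_eq_iff.mpr ⟨by push_cast; linarith, by push_cast; linarith⟩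

/-- The four candidates `rot φ v` are `(cos φ, sin φ)` and its quarter turns, so one of them lies in
any closed quadrant. -/
lemma exists_rot_signs (φ a b : ℝ) :
    ∃ v ∈ ({(1, 0), (-1, 0), (0, 1), (0, -1)} : Finset (ℤ × ℤ)),
      (0 ≤ a → 0 ≤ (rot φ (v.1, v.2)).1) ∧ (a < 0 → (rot φ (v.1, v.2)).1 ≤ 0) ∧
      (0 ≤ b → 0 ≤ (rot φ (v.1, v.2)).2) ∧ (b < 0 → (rot φ (v.1, v.2)).2 ≤ 0) := by
  simp only [mem_insert, mem_singleton, exists_eq_or_imp, exists_eq_left, rot_apply]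
  push_cast
  rcases le_or_gt 0 a with ha | ha <;> rcases le_or_gt 0 b with hb | hb <;>
    rcases le_or_gt 0 (cos φ) with hc | hc <;> rcases le_or_gt 0 (sin φ) with hs | hs <;>
    simp only [ha, hb, not_le.mpr, not_lt.mpr, forall_const, IsEmpty.forall_iff, true_and,
      and_true] <;>
    first
      | (left; constructor <;> linarith)
      | (right; left; constructor <;> linarith)
      | (right; right; left; constructor <;> linarith)
      | (right; right; right; constructor <;> linarith)

lemma exists_rphi_add_eq {φ δ : ℝ} (hc : |cos φ| ≤ 1 - δ) (hs : |sin φ| ≤ 1 - δ) {p : ℤ × ℤ}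
    (h₁ : |(rot φ (p.1, p.2)).1 - round (rot φ (p.1, p.2)).1| < δ)
    (h₂ : |(rot φ (p.1, p.2)).2 - round (rot φ (p.1, p.2)).2| < δ) :
    ∃ v : ℤ × ℤ, v ≠ 0 ∧ |v.1| ≤ 1 ∧ |v.2| ≤ 1 ∧ rphi φ (p + v) = rphi φ p := by
  set x := rot φ (p.1, p.2)
  obtain ⟨v, hv, hv₁, hv₂, hv₃, hv₄⟩ := exists_rot_signs φ (x.1 - round x.1) (x.2 - round x.2)
  have hunit : v ≠ 0 ∧ |v.1| ≤ 1 ∧ |v.2| ≤ 1 ∧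
      |(rot φ (v.1, v.2)).1| ≤ 1 - δ ∧ |(rot φ (v.1, v.2)).2| ≤ 1 - δ := by
    simp only [mem_insert, mem_singleton] at hv
    rcases hv with rfl | rfl | rfl | rfl <;> simp [hc, hs]
  have hsplit : rot φ ((p + v).1, (p + v).2) = x + rot φ (v.1, v.2) := by
    rw [← map_add]
    congr 1
    ext <;> simp
  refine ⟨v, hunit.1, hunit.2.1, hunit.2.2.1, ?_⟩
  rw [rphi_eq_floor_rot, rphi_eq_floor_rot, hsplit, Prod.fst_add, Prod.snd_add,
    floor_add_eq_floor h₁ hunit.2.2.2.1 (fun h => hv₁ (by linarith)) (fun h => hv₂ (by linarith)),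
    floor_add_eq_floor h₂ hunit.2.2.2.2 (fun h => hv₃ (by linarith)) (fun h => hv₄ (by linarith))]

lemma AddMonoidHom.exists_finset_norm_map_add_lt {A X : Type*} [AddGroup A]
    [SeminormedAddCommGroup X] [CompactSpace X] (G : A →+ X) {δ : ℝ} (hδ : 0 < δ) :
    ∃ F : Finset A, ∀ p, ∃ q ∈ F, ‖G (p + q)‖ < δ := by
  classical
  obtain ⟨t, hts, htfin, hcover⟩ := Metric.finite_approx_of_totallyBounded
    (isCompact_univ.totallyBounded.subset (Set.subset_univ (Set.range G))) δ hδ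
  have hpre : ∀ y ∈ t, ∃ a, G a = y := fun y hy => hts hy
  choose! a ha using hpre
  refine ⟨htfin.toFinset.image fun y => -a y, fun p => ?_⟩
  obtain ⟨y, hy, hpy⟩ := Set.mem_iUnion₂.mp (hcover ⟨p, rfl⟩)
  refine ⟨-a y, mem_image_of_mem _ (htfin.mem_toFinset.mpr hy), ?_⟩
  rw [Metric.mem_ball, dist_eq_norm_sub] at hpy
  rwa [map_add, map_neg, ← sub_eq_add_neg, ha y hy]

lemma exists_bounded_shift_near_int (f : ℤ × ℤ →+ ℝ × ℝ) {δ : ℝ} (hδ : 0 < δ) :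
    ∃ K : ℕ, ∀ p : ℤ × ℤ, ∃ q : ℤ × ℤ, |q.1| ≤ K ∧ |q.2| ≤ K ∧
      |(f (p + q)).1 - round (f (p + q)).1| < δ ∧ |(f (p + q)).2 - round (f (p + q)).2| < δ := by
  let mk : ℝ →+ UnitAddCircle := QuotientAddGroup.mk' _
  obtain ⟨F, hF⟩ := ((mk.prodMap mk).comp f).exists_finset_norm_map_add_lt hδ
  refine ⟨F.sup fun q => q.1.natAbs ⊔ q.2.natAbs, fun p => ?_⟩
  obtain ⟨q, hqF, hq⟩ := hF p
  have hK := le_sup (f := fun q : ℤ × ℤ => q.1.natAbs ⊔ q.2.natAbs) hqF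
  have h₁ := (norm_fst_le _).trans_lt hq
  have h₂ := (norm_snd_le _).trans_lt hq
  simp only [AddMonoidHom.comp_apply, AddMonoidHom.coe_prodMap, Prod.map_fst, Prod.map_snd, mk,
    QuotientAddGroup.mk'_apply, UnitAddCircle.norm_eq] at h₁ h₂
  refine ⟨q, ?_, ?_, h₁, h₂⟩ <;> rw [Int.abs_eq_natAbs]
  · exact_mod_cast le_sup_left.trans hK
  · exact_mod_cast le_sup_right.trans hK

lemma eq_of_abs_sub_le_one {K a b q r : ℤ} (hq : |q| ≤ K) (hr : |r| ≤ K)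
    (h : |((2 * K + 2) * a + q) - ((2 * K + 2) * b + r)| ≤ 1) : a = b := by
  by_contra hab
  have hK : 0 ≤ K := (abs_nonneg q).trans hq
  have hgap : 2 * K + 2 ≤ |(2 * K + 2) * (a - b)| := by
    rw [abs_mul, abs_of_pos (by omega)]
    exact le_mul_of_one_le_right (by omega) (Int.one_le_abs (sub_ne_zero.mpr hab))
  have htri := abs_add_three (((2 * K + 2) * a + q) - ((2 * K + 2) * b + r)) (-q) r
  rw [abs_neg, show ((2 * K + 2) * a + q) - ((2 * K + 2) * b + r) + -q + r =
    (2 * K + 2) * (a - b) by ring] at htri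
  omega

lemma exists_sparse_collisions {φ : ℝ} (hc : |cos φ| < 1) (hs : |sin φ| < 1) :
    ∃ d : ℕ, 0 < d ∧ ∀ t : ℕ, ∃ W : Finset (ℤ × ℤ), #W = (2 * t + 1) ^ 2 ∧
      (∀ w ∈ W, |w.1| ≤ d * (t + 1) ∧ |w.2| ≤ d * (t + 1)) ∧
      ∀ w ∈ W, ∃ u ∉ W, rphi φ u = rphi φ w := by
  set δ := 1 - max |cos φ| |sin φ|
  have hδ : 0 < δ := sub_pos.mpr (max_lt hc hs)
  have hcδ : |cos φ| ≤ 1 - δ := by simp [δ]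
  have hsδ : |sin φ| ≤ 1 - δ := by simp [δ]
  let f : ℤ × ℤ →+ ℝ × ℝ :=
    (rot φ).toAddMonoidHom.comp ((Int.castAddHom ℝ).prodMap (Int.castAddHom ℝ))
  obtain ⟨K, hK⟩ := exists_bounded_shift_near_int f hδ
  choose q hq₁ hq₂ hnear₁ hnear₂ using hK
  set d : ℤ := 2 * K + 2
  -- a grid of mesh `2K + 2`, each point moved by at most `K` to one whose image is near `ℤ²`:
  -- distinct moved points still differ by at least `2` in some coordinate
  let g : ℤ × ℤ → ℤ × ℤ := fun i => d • i + q (d • i)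
  have hsep : ∀ i j, |(g i).1 - (g j).1| ≤ 1 → |(g i).2 - (g j).2| ≤ 1 → i = j :=
    fun i j h₁ h₂ => Prod.ext (eq_of_abs_sub_le_one (hq₁ _) (hq₁ _) h₁)
      (eq_of_abs_sub_le_one (hq₂ _) (hq₂ _) h₂)
  refine ⟨2 * K + 2, by omega, fun t => ⟨(square t).image g, ?_, ?_, ?_⟩⟩
  · rw [card_image_of_injective _ fun i j h => hsep i j (by simp [h]) (by simp [h]), card_square]
  · simp only [mem_image, forall_exists_index, and_imp]
    rintro _ i hi rfl
    obtain ⟨hi₁, hi₂⟩ := mem_square.mp hi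
    have hbound : ∀ a b : ℤ, |a| ≤ t → |b| ≤ K → |d * a + b| ≤ d * (t + 1) := fun a b ha hb =>
      calc |d * a + b| ≤ d * |a| + |b| := by
            simpa [abs_mul, abs_of_pos (show 0 < d by omega)] using abs_add_le (d * a) b
        _ ≤ d * t + K := by gcongr
        _ ≤ d * (t + 1) := by linarith
    push_cast
    exact ⟨hbound _ _ hi₁ (hq₁ _), hbound _ _ hi₂ (hq₂ _)⟩
  · simp only [mem_image, forall_exists_index, and_imp]
    rintro _ i - rfl
    have hf : f (g i) = rot φ ((g i).1, (g i).2) := rfl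
    obtain ⟨v, hv₀, hv₁, hv₂, hv⟩ := exists_rphi_add_eq (p := g i) hcδ hsδ
      (hf ▸ hnear₁ (d • i)) (hf ▸ hnear₂ (d • i))
    refine ⟨g i + v, fun hmem => hv₀ ?_, hv⟩
    obtain ⟨j, -, hj⟩ := hmem
    obtain rfl := hsep j i (by simpa [hj] using hv₁) (by simpa [hj] using hv₂)
    simpa using hj

lemma abs_cos_lt_one_of_ne {φ : ℝ} (hφ : ∀ k : ℤ, φ ≠ k * (π / 2)) : |cos φ| < 1 := by
  have hsin : sin φ ≠ 0 := fun h => by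
    obtain ⟨n, hn⟩ := sin_eq_zero_iff.mp h
    exact hφ (2 * n) (by push_cast; linarith)
  nlinarith [sin_sq_add_cos_sq φ, sq_abs (cos φ), abs_nonneg (cos φ), sq_pos_of_ne_zero hsin]

lemma abs_sin_lt_one_of_ne {φ : ℝ} (hφ : ∀ k : ℤ, φ ≠ k * (π / 2)) : |sin φ| < 1 := by
  have hcos : cos φ ≠ 0 := fun h => by
    obtain ⟨n, hn⟩ := cos_eq_zero_iff.mp h
    exact hφ (2 * n + 1) (by push_cast; linarith)
  nlinarith [sin_sq_add_cos_sq φ, sq_abs (sin φ), abs_nonneg (sin φ), sq_pos_of_ne_zero hcos]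

lemma exists_mul_succ_le_lt {m M : ℕ} (hm : 0 < m) (hM : m ≤ M) :
    ∃ t : ℕ, m * (t + 1) ≤ M ∧ M < m * (t + 2) := by
  have hq : 1 ≤ M / m := (Nat.one_le_div_iff hm).mpr hM
  refine ⟨M / m - 1, ?_, ?_⟩
  · rw [Nat.sub_add_cancel hq]
    exact Nat.mul_div_le M m
  · rw [show M / m - 1 + 2 = M / m + 1 by omega]
    exact Nat.lt_mul_div_succ M hm

lemma quadratic_lower_bound {d M t : ℝ} (hd : 1 ≤ d) (hM : 320 * d ^ 2 ≤ M)
    (ht : M < 2 * d * (t + 2)) :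
    1 / (8 * d ^ 2) * M ^ 2 ≤ (2 * M + 1) ^ 2 + (2 * t + 1) ^ 2 - (2 * M + 5) ^ 2 := by
  have hM₁ : 1 ≤ M := by nlinarith
  have hgrid : M ≤ 2 * d * (2 * t + 1) := by nlinarith
  have hsq : M ^ 2 ≤ 4 * d ^ 2 * (2 * t + 1) ^ 2 := by nlinarith
  rw [one_div_mul_eq_div, div_le_iff₀ (by positivity)]
  nlinarith

theorem Ncount_quadratic_general (φ : ℝ) (hφ : ∀ k : ℤ, φ ≠ (k : ℝ) * (Real.pi / 2)) :
    ∃ c₅ c₆ : ℝ, 0 < c₅ ∧ 0 < c₆ ∧ ∃ M₀ : ℕ, 0 < M₀ ∧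
      ∀ M : ℕ, M₀ ≤ M → c₅ * (M : ℝ) ^ 2 ≤ (Ncount φ M : ℝ) ∧
        (Ncount φ M : ℝ) ≤ c₆ * (M : ℝ) ^ 2 := by
  obtain ⟨d, hd, hcollide⟩ :=
    exists_sparse_collisions (abs_cos_lt_one_of_ne hφ) (abs_sin_lt_one_of_ne hφ)
  have hd₁ : (1 : ℝ) ≤ d := by exact_mod_cast hd
  refine ⟨1 / (8 * d ^ 2), 9, by positivity, by norm_num, 320 * d ^ 2, by positivity,
    fun M hM => ⟨?_, ?_⟩⟩
  · have hMR : 320 * (d : ℝ) ^ 2 ≤ M := by exact_mod_cast hM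
    obtain ⟨t, ht₁, ht₂⟩ := exists_mul_succ_le_lt (by omega : 0 < 2 * d) (by nlinarith)
    obtain ⟨W, hWcard, hWsmall, hWcol⟩ := hcollide t
    have ht₁' : 2 * ((d : ℤ) * (t + 1)) ≤ M := by rw [← mul_assoc]; exact_mod_cast ht₁
    have hWsq : ∀ w ∈ W, rphi φ w ∈ square M := fun w hw =>
      rphi_mem_square_of_abs_le φ M (by linarith [(hWsmall w hw).1])
        (by linarith [(hWsmall w hw).2])
    have hcount := card_square_add_card_le_Ncount_add φ M hWsq hWcol
    rw [hWcard] at hcount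
    push_cast at hcount
    have ht₂' : (M : ℝ) < 2 * d * (t + 2) := by exact_mod_cast ht₂
    linarith [quadratic_lower_bound hd₁ hMR ht₂']
  · have hM₁ : (1 : ℝ) ≤ M := by exact_mod_cast (by nlinarith : 1 ≤ M)
    calc (Ncount φ M : ℝ) ≤ (2 * M + 1) ^ 2 := by exact_mod_cast Ncount_le φ M
      _ ≤ 9 * M ^ 2 := by nlinarith

theorem Ncount_quadratic (φ : ℝ) (hφ : ∀ k : ℤ, φ ≠ (k : ℝ) * (Real.pi / 2))
    (hexc : ¬ Exceptional φ) :
    ∃ c₅ c₆ : ℝ, 0 < c₅ ∧ 0 < c₆ ∧ ∃ M₀ : ℕ, 0 < M₀ ∧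
      ∀ M : ℕ, M₀ ≤ M → c₅ * (M : ℝ) ^ 2 ≤ (Ncount φ M : ℝ) ∧
        (Ncount φ M : ℝ) ≤ c₆ * (M : ℝ) ^ 2 :=
  Ncount_quadratic_general φ hφ
end

section
/- Let 0 < t₁, t₂ ≤ 1 and let φ ∈ ℝ be an angle that is not an integer multiple of π/2 and that is not exceptional. Then there exist real constants c₁, c₂ > 0 (depending only on φ, t₁, t₂) and a positive integer M₀ such that for every integer M ≥ M₀, the number of pairs (x₁,x₂) ∈ ℤ² with |x₁| ≤ M, |x₂| ≤ M, {x₁·cos φ − x₂·sin φ} < t₁ and {x₁·sin φ + x₂·cos φ} < t₂ lies between c₁·M² and c₂·M². -/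
set_option maxHeartbeats 1000000

open Classical in
/-- The number of lattice points `(x₁,x₂)` with `|x₁|,|x₂| ≤ M` satisfying
`{x₁ cos φ − x₂ sin φ} < t₁` and `{x₁ sin φ + x₂ cos φ} < t₂`. -/
noncomputable def Scount (φ t₁ t₂ : ℝ) (M : ℕ) : ℕ :=
  ((Finset.Icc (-(M : ℤ), -(M : ℤ)) ((M : ℤ), (M : ℤ))).filter
    fun x => Int.fract ((x.1 : ℝ) * Real.cos φ - (x.2 : ℝ) * Real.sin φ) < t₁ ∧
      Int.fract ((x.1 : ℝ) * Real.sin φ + (x.2 : ℝ) * Real.cos φ) < t₂).card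

open Classical in
/-- The same count restricted to pairs of odd integers. -/
noncomputable def ScountOdd (φ t₁ t₂ : ℝ) (M : ℕ) : ℕ :=
  ((Finset.Icc (-(M : ℤ), -(M : ℤ)) ((M : ℤ), (M : ℤ))).filter
    fun x => Odd x.1 ∧ Odd x.2 ∧
      Int.fract ((x.1 : ℝ) * Real.cos φ - (x.2 : ℝ) * Real.sin φ) < t₁ ∧
      Int.fract ((x.1 : ℝ) * Real.sin φ + (x.2 : ℝ) * Real.cos φ) < t₂).card

lemma Scount_eq (φ t₁ t₂ : ℝ) (M : ℕ) [∀ x : ℤ × ℤ,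
    Decidable (Int.fract ((x.1 : ℝ) * Real.cos φ - (x.2 : ℝ) * Real.sin φ) < t₁ ∧
      Int.fract ((x.1 : ℝ) * Real.sin φ + (x.2 : ℝ) * Real.cos φ) < t₂)] :
    Scount φ t₁ t₂ M =
    ((Finset.Icc (-(M : ℤ), -(M : ℤ)) ((M : ℤ), (M : ℤ))).filter
      fun x => Int.fract ((x.1 : ℝ) * Real.cos φ - (x.2 : ℝ) * Real.sin φ) < t₁ ∧
        Int.fract ((x.1 : ℝ) * Real.sin φ + (x.2 : ℝ) * Real.cos φ) < t₂).card := by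
  unfold Scount
  congr 1
  exact Finset.filter_congr_decidable _ _ _

lemma exists_good_q (θ ψ : ℝ) (K : ℕ) (hK : 0 < K) :
    ∃ q : ℕ, 0 < q ∧ q ≤ K ^ 2 ∧ ∃ (A B : ℤ) (α β : ℝ),
      |α| < 1 / K ∧ |β| < 1 / K ∧ (q : ℝ) * θ = A + α ∧ (q : ℝ) * ψ = B + β := by
  classical
  have hKR : (0:ℝ) < K := by exact_mod_cast hK
  set f : ℕ → ℤ × ℤ := fun x =>
    (⌊(K:ℝ) * Int.fract (x * θ)⌋, ⌊(K:ℝ) * Int.fract (x * ψ)⌋) with hf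
  have hfl : ∀ y : ℝ, (0:ℤ) ≤ ⌊(K:ℝ) * Int.fract y⌋ ∧ ⌊(K:ℝ) * Int.fract y⌋ ≤ (K:ℤ) - 1 := by
    intro y
    constructor
    · exact Int.floor_nonneg.2 (mul_nonneg hKR.le (Int.fract_nonneg y))
    · have h2 : (K:ℝ) * Int.fract y < ((K:ℤ):ℝ) := by
        have := Int.fract_lt_one y
        push_cast
        nlinarith
      have := Int.floor_lt.2 h2
      omega
  have hmaps : ∀ x ∈ Finset.range (K ^ 2 + 1),
      f x ∈ Finset.Icc ((0:ℤ),(0:ℤ)) ((K:ℤ)-1,(K:ℤ)-1) := by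
    intro x _
    simp only [Finset.mem_Icc, Prod.le_def, hf]
    exact ⟨⟨(hfl _).1, (hfl _).1⟩, ⟨(hfl _).2, (hfl _).2⟩⟩
  have hcard : (Finset.Icc ((0:ℤ),(0:ℤ)) ((K:ℤ)-1,(K:ℤ)-1)).card < (Finset.range (K ^ 2 + 1)).card := by
    rw [Finset.card_range, Finset.Icc_prod_def, Finset.card_product]
    simp only [Int.card_Icc]
    have : ((K:ℤ) - 1 + 1 - 0).toNat = K := by omega
    rw [this]
    nlinarith
  obtain ⟨x, hx, y, hy, hxy, hfeq⟩ :=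
    Finset.exists_ne_map_eq_of_card_lt_of_maps_to hcard hmaps
  have key : ∀ x y : ℕ, x ∈ Finset.range (K ^ 2 + 1) → y ∈ Finset.range (K ^ 2 + 1) →
      x < y → f x = f y →
      ∃ q : ℕ, 0 < q ∧ q ≤ K ^ 2 ∧ ∃ (A B : ℤ) (α β : ℝ),
        |α| < 1 / K ∧ |β| < 1 / K ∧ (q : ℝ) * θ = A + α ∧ (q : ℝ) * ψ = B + β := by
    intro x y hx hy hlt heq
    simp only [Finset.mem_range] at hx hy
    refine ⟨y - x, by omega, by omega,
      ⌊(y:ℝ)*θ⌋ - ⌊(x:ℝ)*θ⌋, ⌊(y:ℝ)*ψ⌋ - ⌊(x:ℝ)*ψ⌋,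
      Int.fract ((y:ℝ)*θ) - Int.fract ((x:ℝ)*θ),
      Int.fract ((y:ℝ)*ψ) - Int.fract ((x:ℝ)*ψ), ?_, ?_, ?_, ?_⟩
    · have h1 : ⌊(K:ℝ) * Int.fract (x * θ)⌋ = ⌊(K:ℝ) * Int.fract (y * θ)⌋ :=
        congrArg Prod.fst heq
      have h2 := Int.abs_sub_lt_one_of_floor_eq_floor h1
      rw [← mul_sub, abs_mul, abs_of_nonneg hKR.le] at h2
      rw [abs_sub_comm] at h2
      rw [lt_div_iff₀ hKR]
      linarith
    · have h1 : ⌊(K:ℝ) * Int.fract (x * ψ)⌋ = ⌊(K:ℝ) * Int.fract (y * ψ)⌋ :=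
        congrArg Prod.snd heq
      have h2 := Int.abs_sub_lt_one_of_floor_eq_floor h1
      rw [← mul_sub, abs_mul, abs_of_nonneg hKR.le] at h2
      rw [abs_sub_comm] at h2
      rw [lt_div_iff₀ hKR]
      linarith
    · have : ((y - x : ℕ) : ℝ) = (y:ℝ) - x := by
        push_cast [Nat.cast_sub hlt.le]; ring
      rw [this, sub_mul]
      have e1 : (y:ℝ)*θ = ⌊(y:ℝ)*θ⌋ + Int.fract ((y:ℝ)*θ) := (Int.floor_add_fract _).symm
      have e2 : (x:ℝ)*θ = ⌊(x:ℝ)*θ⌋ + Int.fract ((x:ℝ)*θ) := (Int.floor_add_fract _).symm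
      push_cast
      linarith
    · have : ((y - x : ℕ) : ℝ) = (y:ℝ) - x := by
        push_cast [Nat.cast_sub hlt.le]; ring
      rw [this, sub_mul]
      have e1 : (y:ℝ)*ψ = ⌊(y:ℝ)*ψ⌋ + Int.fract ((y:ℝ)*ψ) := (Int.floor_add_fract _).symm
      have e2 : (x:ℝ)*ψ = ⌊(x:ℝ)*ψ⌋ + Int.fract ((x:ℝ)*ψ) := (Int.floor_add_fract _).symm
      push_cast
      linarith
  rcases lt_or_gt_of_ne hxy with h | h
  · exact key x y hx hy h hfeq
  · exact key y x hy hx h hfeq.symm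

lemma roundpt (α β rr w₁ w₂ : ℝ) (hrr : 0 < rr) (hrr2 : rr ^ 2 = α ^ 2 + β ^ 2)
    (hαr : |α| ≤ rr) (hβr : |β| ≤ rr) :
    |((round ((α * w₁ + β * w₂) / rr ^ 2) : ℤ) : ℝ) * α -
        ((round ((-β * w₁ + α * w₂) / rr ^ 2) : ℤ) : ℝ) * β - w₁| ≤ rr ∧
    |((round ((α * w₁ + β * w₂) / rr ^ 2) : ℤ) : ℝ) * β +
        ((round ((-β * w₁ + α * w₂) / rr ^ 2) : ℤ) : ℝ) * α - w₂| ≤ rr ∧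
    |((round ((α * w₁ + β * w₂) / rr ^ 2) : ℤ) : ℝ)| ≤ (|w₁| + |w₂|) / rr + 1 ∧
    |((round ((-β * w₁ + α * w₂) / rr ^ 2) : ℤ) : ℝ)| ≤ (|w₁| + |w₂|) / rr + 1 := by
  have hrr2ne : rr ^ 2 ≠ 0 := by positivity
  set z₁ : ℝ := (α * w₁ + β * w₂) / rr ^ 2 with hz₁
  set z₂ : ℝ := (-β * w₁ + α * w₂) / rr ^ 2 with hz₂
  have e₁ : z₁ * α - z₂ * β = w₁ := by
    rw [hz₁, hz₂]; field_simp; linear_combination (-w₁) * hrr2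
  have e₂ : z₁ * β + z₂ * α = w₂ := by
    rw [hz₁, hz₂]; field_simp; linear_combination (-w₂) * hrr2
  have r₁ : |(round z₁ : ℝ) - z₁| ≤ 1 / 2 := by
    rw [abs_sub_comm]; exact abs_sub_round z₁
  have r₂ : |(round z₂ : ℝ) - z₂| ≤ 1 / 2 := by
    rw [abs_sub_comm]; exact abs_sub_round z₂
  have hzb₁ : |z₁| ≤ (|w₁| + |w₂|) / rr := by
    have h4 : |α * w₁ + β * w₂| ≤ rr * (|w₁| + |w₂|) := by
      have h5 : |α * w₁ + β * w₂| ≤ |α| * |w₁| + |β| * |w₂| := by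
        calc |α * w₁ + β * w₂| ≤ |α * w₁| + |β * w₂| := abs_add_le _ _
          _ = |α| * |w₁| + |β| * |w₂| := by rw [abs_mul, abs_mul]
      nlinarith [abs_nonneg w₁, abs_nonneg w₂]
    rw [hz₁, abs_div, abs_of_pos (by positivity : (0:ℝ) < rr ^ 2),
      div_le_div_iff₀ (by positivity) hrr]
    calc |α * w₁ + β * w₂| * rr ≤ (rr * (|w₁| + |w₂|)) * rr :=
          mul_le_mul_of_nonneg_right h4 hrr.le
      _ = (|w₁| + |w₂|) * rr ^ 2 := by ring
  have hzb₂ : |z₂| ≤ (|w₁| + |w₂|) / rr := by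
    have h4 : |-β * w₁ + α * w₂| ≤ rr * (|w₁| + |w₂|) := by
      have h5 : |-β * w₁ + α * w₂| ≤ |β| * |w₁| + |α| * |w₂| := by
        calc |-β * w₁ + α * w₂| ≤ |(-β) * w₁| + |α * w₂| := abs_add_le _ _
          _ = |β| * |w₁| + |α| * |w₂| := by rw [abs_mul, abs_mul, abs_neg]
      nlinarith [abs_nonneg w₁, abs_nonneg w₂]
    rw [hz₂, abs_div, abs_of_pos (by positivity : (0:ℝ) < rr ^ 2),
      div_le_div_iff₀ (by positivity) hrr]
    calc |-β * w₁ + α * w₂| * rr ≤ (rr * (|w₁| + |w₂|)) * rr :=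
          mul_le_mul_of_nonneg_right h4 hrr.le
      _ = (|w₁| + |w₂|) * rr ^ 2 := by ring
  refine ⟨?_, ?_, ?_, ?_⟩
  · have heq : ((round z₁ : ℤ) : ℝ) * α - ((round z₂ : ℤ) : ℝ) * β - w₁ =
        ((round z₁ : ℝ) - z₁) * α - ((round z₂ : ℝ) - z₂) * β := by
      linear_combination e₁
    rw [heq]
    calc |((round z₁ : ℝ) - z₁) * α - ((round z₂ : ℝ) - z₂) * β|
        ≤ |((round z₁ : ℝ) - z₁) * α| + |((round z₂ : ℝ) - z₂) * β| := abs_sub _ _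
      _ = |(round z₁ : ℝ) - z₁| * |α| + |(round z₂ : ℝ) - z₂| * |β| := by
          rw [abs_mul, abs_mul]
      _ ≤ (1/2) * rr + (1/2) * rr := by
          have m₁ : |(round z₁ : ℝ) - z₁| * |α| ≤ (1/2) * rr :=
            mul_le_mul r₁ hαr (abs_nonneg _) (by norm_num)
          have m₂ : |(round z₂ : ℝ) - z₂| * |β| ≤ (1/2) * rr :=
            mul_le_mul r₂ hβr (abs_nonneg _) (by norm_num)
          linarith
      _ = rr := by ring
  · have heq : ((round z₁ : ℤ) : ℝ) * β + ((round z₂ : ℤ) : ℝ) * α - w₂ =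
        ((round z₁ : ℝ) - z₁) * β + ((round z₂ : ℝ) - z₂) * α := by
      linear_combination e₂
    rw [heq]
    calc |((round z₁ : ℝ) - z₁) * β + ((round z₂ : ℝ) - z₂) * α|
        ≤ |((round z₁ : ℝ) - z₁) * β| + |((round z₂ : ℝ) - z₂) * α| := abs_add_le _ _
      _ = |(round z₁ : ℝ) - z₁| * |β| + |(round z₂ : ℝ) - z₂| * |α| := by
          rw [abs_mul, abs_mul]
      _ ≤ (1/2) * rr + (1/2) * rr := by
          have m₁ : |(round z₁ : ℝ) - z₁| * |β| ≤ (1/2) * rr :=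
            mul_le_mul r₁ hβr (abs_nonneg _) (by norm_num)
          have m₂ : |(round z₂ : ℝ) - z₂| * |α| ≤ (1/2) * rr :=
            mul_le_mul r₂ hαr (abs_nonneg _) (by norm_num)
          linarith
      _ = rr := by ring
  · have : |(round z₁ : ℝ)| ≤ |(round z₁ : ℝ) - z₁| + |z₁| := by
      calc |(round z₁ : ℝ)| = |((round z₁ : ℝ) - z₁) + z₁| := by ring_nf
        _ ≤ |(round z₁ : ℝ) - z₁| + |z₁| := abs_add_le _ _
    linarith
  · have : |(round z₂ : ℝ)| ≤ |(round z₂ : ℝ) - z₂| + |z₂| := by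
      calc |(round z₂ : ℝ)| = |((round z₂ : ℝ) - z₂) + z₂| := by ring_nf
        _ ≤ |(round z₂ : ℝ) - z₂| + |z₂| := abs_add_le _ _
    linarith

lemma case1 (φ t₁ t₂ : ℝ) (q : ℕ) (A B : ℤ)
    (ht₁ : 0 < t₁) (ht₂ : 0 < t₂) (hq0 : 0 < q)
    (hA : (q : ℝ) * Real.cos φ = A) (hB : (q : ℝ) * Real.sin φ = B) :
    ∀ M : ℕ, ((M : ℝ) / (2 * q)) ^ 2 ≤ (Scount φ t₁ t₂ M : ℝ) := by
  classical
  intro M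
  have hq0R : (0:ℝ) < q := by exact_mod_cast hq0
  set J : ℕ := M / q with hJdef
  have hqJM : q * J ≤ M := Nat.mul_div_le M q
  have hqZ : ((q:ℤ)) ≠ 0 := by exact_mod_cast hq0.ne'
  have hfract1 : ∀ n₁ n₂ : ℤ,
      Int.fract ((((q:ℤ) * n₁ : ℤ) : ℝ) * Real.cos φ - (((q:ℤ) * n₂ : ℤ) : ℝ) * Real.sin φ) = 0 := by
    intro n₁ n₂
    have he : (((q:ℤ) * n₁ : ℤ) : ℝ) * Real.cos φ - (((q:ℤ) * n₂ : ℤ) : ℝ) * Real.sin φ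
        = ((n₁ * A - n₂ * B : ℤ) : ℝ) := by
      push_cast
      linear_combination (n₁ : ℝ) * hA - (n₂ : ℝ) * hB
    rw [he, Int.fract_intCast]
  have hfract2 : ∀ n₁ n₂ : ℤ,
      Int.fract ((((q:ℤ) * n₁ : ℤ) : ℝ) * Real.sin φ + (((q:ℤ) * n₂ : ℤ) : ℝ) * Real.cos φ) = 0 := by
    intro n₁ n₂
    have he : (((q:ℤ) * n₁ : ℤ) : ℝ) * Real.sin φ + (((q:ℤ) * n₂ : ℤ) : ℝ) * Real.cos φ
        = ((n₁ * B + n₂ * A : ℤ) : ℝ) := by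
      push_cast
      linear_combination (n₁ : ℝ) * hB + (n₂ : ℝ) * hA
    rw [he, Int.fract_intCast]
  set I := Finset.Icc (-(J:ℤ)) (J:ℤ) ×ˢ Finset.Icc (-(J:ℤ)) (J:ℤ) with hI
  set F : ℤ × ℤ → ℤ × ℤ := fun e => ((q:ℤ) * e.1, (q:ℤ) * e.2) with hF
  have hmapsto : ∀ e ∈ I, F e ∈ (Finset.Icc (-(M : ℤ), -(M : ℤ)) ((M : ℤ), (M : ℤ))).filter
      (fun x => Int.fract ((x.1 : ℝ) * Real.cos φ - (x.2 : ℝ) * Real.sin φ) < t₁ ∧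
        Int.fract ((x.1 : ℝ) * Real.sin φ + (x.2 : ℝ) * Real.cos φ) < t₂) := by
    rintro ⟨j, k⟩ he
    simp only [hI, Finset.mem_product, Finset.mem_Icc] at he
    obtain ⟨⟨hj1, hj2⟩, hk1, hk2⟩ := he
    have hqJM' : (q:ℤ) * (J:ℤ) ≤ (M:ℤ) := by exact_mod_cast hqJM
    have h1 : |(q:ℤ) * j| ≤ (M:ℤ) := by
      rw [abs_mul, abs_of_nonneg (by positivity : (0:ℤ) ≤ (q:ℤ))]
      calc (q:ℤ) * |j| ≤ (q:ℤ) * (J:ℤ) :=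
            mul_le_mul_of_nonneg_left (abs_le.2 ⟨hj1, hj2⟩) (by positivity)
        _ ≤ (M:ℤ) := hqJM'
    have h2 : |(q:ℤ) * k| ≤ (M:ℤ) := by
      rw [abs_mul, abs_of_nonneg (by positivity : (0:ℤ) ≤ (q:ℤ))]
      calc (q:ℤ) * |k| ≤ (q:ℤ) * (J:ℤ) :=
            mul_le_mul_of_nonneg_left (abs_le.2 ⟨hk1, hk2⟩) (by positivity)
        _ ≤ (M:ℤ) := hqJM'
    refine Finset.mem_filter.2 ⟨?_, ?_, ?_⟩
    · exact Finset.mem_Icc.2 ⟨Prod.mk_le_mk.2 ⟨(abs_le.1 h1).1, (abs_le.1 h2).1⟩,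
        Prod.mk_le_mk.2 ⟨(abs_le.1 h1).2, (abs_le.1 h2).2⟩⟩
    · show Int.fract ((((q:ℤ) * j : ℤ) : ℝ) * Real.cos φ -
        (((q:ℤ) * k : ℤ) : ℝ) * Real.sin φ) < t₁
      rw [hfract1 j k]; exact ht₁
    · show Int.fract ((((q:ℤ) * j : ℤ) : ℝ) * Real.sin φ +
        (((q:ℤ) * k : ℤ) : ℝ) * Real.cos φ) < t₂
      rw [hfract2 j k]; exact ht₂
  have hinj : Set.InjOn F ↑I := by
    rintro ⟨j, k⟩ _ ⟨j', k'⟩ _ heq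
    simp only [hF, Prod.mk.injEq] at heq
    exact Prod.ext (mul_left_cancel₀ hqZ heq.1) (mul_left_cancel₀ hqZ heq.2)
  have hcardle : I.card ≤ Scount φ t₁ t₂ M := by
    rw [Scount_eq]
    exact Finset.card_le_card_of_injOn F hmapsto hinj
  have hIcard : I.card = (2*J+1) * (2*J+1) := by
    rw [hI, Finset.card_product, Int.card_Icc]
    have h8 : ((J:ℤ) + 1 - -(J:ℤ)).toNat = 2*J+1 := by omega
    rw [h8]
  have hMq1 : (M:ℝ) < ((J:ℝ) + 1) * q := by
    have h := Nat.lt_succ_self J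
    rw [hJdef] at h
    have := (Nat.div_lt_iff_lt_mul hq0).1 h
    exact_mod_cast this
  have hdiv : (M:ℝ) / (2*q) ≤ 2*(J:ℝ)+1 := by
    rw [div_le_iff₀ (by positivity)]
    nlinarith [hq0R, Nat.cast_nonneg J (α := ℝ)]
  have hdiv0 : (0:ℝ) ≤ (M:ℝ)/(2*q) := by positivity
  calc ((M:ℝ)/(2*q))^2 ≤ (2*(J:ℝ)+1)^2 := by nlinarith
    _ = (((2*J+1) * (2*J+1) : ℕ) : ℝ) := by push_cast; ring
    _ ≤ (Scount φ t₁ t₂ M : ℝ) := Nat.cast_le.2 (hIcard ▸ hcardle)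

lemma case2 (φ t₁ t₂ α β : ℝ) (q : ℕ) (A B : ℤ)
    (ht₁ : 0 < t₁) (ht₁' : t₁ ≤ 1) (ht₂ : 0 < t₂) (ht₂' : t₂ ≤ 1)
    (hq0 : 0 < q)
    (hA : (q : ℝ) * Real.cos φ = A + α) (hB : (q : ℝ) * Real.sin φ = B + β)
    (hα1 : |α| ≤ t₁ / 200) (hα2 : |α| ≤ t₂ / 200)
    (hβ1 : |β| ≤ t₁ / 200) (hβ2 : |β| ≤ t₂ / 200)
    (hne : ¬(α = 0 ∧ β = 0)) :
    ∃ M₀ : ℕ, 0 < M₀ ∧ ∀ M : ℕ, M₀ ≤ M →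
      t₁ * t₂ / 36864 * ((M : ℝ) / q) ^ 2 ≤ (Scount φ t₁ t₂ M : ℝ) := by
  classical
  have hq0R : (0:ℝ) < q := by exact_mod_cast hq0
  -- positivity of the error vector
  have h2 : 0 < α ^ 2 + β ^ 2 := by
    rcases not_and_or.1 hne with h | h
    · nlinarith [sq_abs α, abs_pos.2 h, sq_nonneg β]
    · nlinarith [sq_abs β, abs_pos.2 h, sq_nonneg α]
  set rr : ℝ := Real.sqrt (α ^ 2 + β ^ 2) with hrrdef
  have hrr : 0 < rr := Real.sqrt_pos.2 h2
  have hrr2 : rr ^ 2 = α ^ 2 + β ^ 2 := Real.sq_sqrt h2.le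
  have hαr : |α| ≤ rr := by nlinarith [sq_abs α, sq_nonneg β, abs_nonneg α]
  have hβr : |β| ≤ rr := by nlinarith [sq_abs β, sq_nonneg α, abs_nonneg β]
  have habs : rr ≤ |α| + |β| := by
    have h := Real.sqrt_le_sqrt (by nlinarith [abs_nonneg α, abs_nonneg β, sq_abs α, sq_abs β] :
      α ^ 2 + β ^ 2 ≤ (|α| + |β|) ^ 2)
    rwa [Real.sqrt_sq (by positivity)] at h
  have hrt₁ : rr ≤ t₁ / 100 := by linarith
  have hrt₂ : rr ≤ t₂ / 100 := by linarith
  have hrr1 : rr ≤ 1 := by linarith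
  -- the grid sizes
  set N₁ : ℕ := ⌊t₁ / (6 * rr)⌋₊ with hN₁def
  set N₂ : ℕ := ⌊t₂ / (6 * rr)⌋₊ with hN₂def
  have hN₁u : 6 * (N₁ : ℝ) * rr ≤ t₁ := by
    have h := Nat.floor_le (by positivity : (0:ℝ) ≤ t₁ / (6 * rr))
    rw [le_div_iff₀ (by positivity)] at h
    linarith
  have hN₁l : t₁ ≤ 12 * (N₁ : ℝ) * rr := by
    have h := Nat.lt_floor_add_one (t₁ / (6 * rr))
    rw [div_lt_iff₀ (by positivity)] at h
    nlinarith [mul_nonneg (Nat.cast_nonneg N₁ : (0:ℝ) ≤ (N₁:ℝ)) hrr.le]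
  have hN₂u : 6 * (N₂ : ℝ) * rr ≤ t₂ := by
    have h := Nat.floor_le (by positivity : (0:ℝ) ≤ t₂ / (6 * rr))
    rw [le_div_iff₀ (by positivity)] at h
    linarith
  have hN₂l : t₂ ≤ 12 * (N₂ : ℝ) * rr := by
    have h := Nat.lt_floor_add_one (t₂ / (6 * rr))
    rw [div_lt_iff₀ (by positivity)] at h
    nlinarith [mul_nonneg (Nat.cast_nonneg N₂ : (0:ℝ) ≤ (N₂:ℝ)) hrr.le]
  refine ⟨q * (⌈(32:ℝ) / rr⌉₊ + 3), by positivity, ?_⟩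
  intro M hM
  -- basic facts about J = M / q
  set J : ℕ := M / q with hJdef
  have hqJM : q * J ≤ M := by
    rw [hJdef]; exact (Nat.mul_div_le M q).trans_eq (by ring_nf)
  have hJl : (32:ℝ) / rr + 3 ≤ (J : ℝ) := by
    have h1 : ⌈(32:ℝ) / rr⌉₊ + 3 ≤ J := by
      rw [hJdef, Nat.le_div_iff_mul_le hq0]
      calc (⌈(32:ℝ) / rr⌉₊ + 3) * q = q * (⌈(32:ℝ) / rr⌉₊ + 3) := by ring
        _ ≤ M := hM
    have h2 : ((32:ℝ) / rr) ≤ ⌈(32:ℝ) / rr⌉₊ := Nat.le_ceil _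
    have h3 : ((⌈(32:ℝ) / rr⌉₊ + 3 : ℕ) : ℝ) ≤ (J : ℝ) := by exact_mod_cast h1
    push_cast at h3
    linarith
  have hrJ : (32:ℝ) ≤ rr * J := by
    have : (32:ℝ) / rr * rr = 32 := div_mul_cancel₀ _ hrr.ne'
    nlinarith
  have hJpos : (0:ℝ) < (J:ℝ) := by nlinarith [div_nonneg (by norm_num : (0:ℝ) ≤ 32) hrr.le]
  have hMq1 : (M:ℝ) < (J + 1) * q := by
    have h := Nat.lt_succ_self J
    rw [hJdef] at h
    have := (Nat.div_lt_iff_lt_mul hq0).1 h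
    exact_mod_cast this
  have hM2q : (2:ℝ) * q ≤ M := by
    have h1 : q * 2 ≤ q * (⌈(32:ℝ) / rr⌉₊ + 3) := Nat.mul_le_mul_left _ (by omega)
    have h2 : ((q * 2 : ℕ) : ℝ) ≤ (M:ℝ) := Nat.cast_le.2 (h1.trans hM)
    push_cast at h2
    linarith
  have hMJ : (M:ℝ) ≤ 2 * q * J := by nlinarith
  -- translation range P
  set P : ℕ := ⌊rr * (J:ℝ) / 8⌋₊ with hPdef
  have hPu : (P:ℝ) ≤ rr * J / 8 := Nat.floor_le (by positivity)
  have hPl : rr * J / 8 ≤ 2 * (P:ℝ) + 1 := by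
    have := Nat.lt_floor_add_one (rr * (J:ℝ) / 8)
    have hP0 : (0:ℝ) ≤ (P:ℝ) := Nat.cast_nonneg _
    linarith
  -- transfer of fractional parts
  have hfract1 : ∀ n₁ n₂ : ℤ,
      Int.fract ((((q:ℤ) * n₁ : ℤ) : ℝ) * Real.cos φ - (((q:ℤ) * n₂ : ℤ) : ℝ) * Real.sin φ)
        = Int.fract ((n₁ : ℝ) * α - (n₂ : ℝ) * β) := by
    intro n₁ n₂
    have he : (((q:ℤ) * n₁ : ℤ) : ℝ) * Real.cos φ - (((q:ℤ) * n₂ : ℤ) : ℝ) * Real.sin φ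
        = ((n₁ * A - n₂ * B : ℤ) : ℝ) + ((n₁ : ℝ) * α - (n₂ : ℝ) * β) := by
      push_cast
      linear_combination (n₁ : ℝ) * hA - (n₂ : ℝ) * hB
    rw [he, Int.fract_intCast_add]
  have hfract2 : ∀ n₁ n₂ : ℤ,
      Int.fract ((((q:ℤ) * n₁ : ℤ) : ℝ) * Real.sin φ + (((q:ℤ) * n₂ : ℤ) : ℝ) * Real.cos φ)
        = Int.fract ((n₁ : ℝ) * β + (n₂ : ℝ) * α) := by
    intro n₁ n₂
    have he : (((q:ℤ) * n₁ : ℤ) : ℝ) * Real.sin φ + (((q:ℤ) * n₂ : ℤ) : ℝ) * Real.cos φ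
        = ((n₁ * B + n₂ * A : ℤ) : ℝ) + ((n₁ : ℝ) * β + (n₂ : ℝ) * α) := by
      push_cast
      linear_combination (n₁ : ℝ) * hB + (n₂ : ℝ) * hA
    rw [he, Int.fract_intCast_add]
  -- the main per-element construction
  have helem : ∀ (p pq : ℤ) (i m : ℕ), -(P:ℤ) ≤ p → p ≤ P → -(P:ℤ) ≤ pq → pq ≤ P →
      i < N₁ → m < N₂ →
      ∃ n₁ n₂ : ℤ,
        n₁ = round ((α * ((p:ℝ) + t₁/4 + (1+3*(i:ℝ))*rr) +
            β * ((pq:ℝ) + t₂/4 + (1+3*(m:ℝ))*rr)) / rr ^ 2) ∧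
        n₂ = round ((-β * ((p:ℝ) + t₁/4 + (1+3*(i:ℝ))*rr) +
            α * ((pq:ℝ) + t₂/4 + (1+3*(m:ℝ))*rr)) / rr ^ 2) ∧
        |n₁| ≤ (J:ℤ) ∧ |n₂| ≤ (J:ℤ) ∧
        (p:ℝ) + t₁/4 + 3*(i:ℝ)*rr ≤ (n₁:ℝ)*α - (n₂:ℝ)*β ∧
        (n₁:ℝ)*α - (n₂:ℝ)*β ≤ (p:ℝ) + t₁/4 + (3*(i:ℝ)+2)*rr ∧
        (pq:ℝ) + t₂/4 + 3*(m:ℝ)*rr ≤ (n₁:ℝ)*β + (n₂:ℝ)*α ∧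
        (n₁:ℝ)*β + (n₂:ℝ)*α ≤ (pq:ℝ) + t₂/4 + (3*(m:ℝ)+2)*rr ∧
        ⌊(n₁:ℝ)*α - (n₂:ℝ)*β⌋ = p ∧ ⌊(n₁:ℝ)*β + (n₂:ℝ)*α⌋ = pq ∧
        Int.fract ((n₁:ℝ)*α - (n₂:ℝ)*β) < t₁ ∧ Int.fract ((n₁:ℝ)*β + (n₂:ℝ)*α) < t₂ := by
    intro p pq i m hp1 hp2 hpq1 hpq2 hi hm
    set w₁ : ℝ := (p:ℝ) + t₁/4 + (1+3*(i:ℝ))*rr with hw₁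
    set w₂ : ℝ := (pq:ℝ) + t₂/4 + (1+3*(m:ℝ))*rr with hw₂
    obtain ⟨k1, k2, k3, k4⟩ := roundpt α β rr w₁ w₂ hrr hrr2 hαr hβr
    set n₁ : ℤ := round ((α * w₁ + β * w₂) / rr ^ 2) with hn₁
    set n₂ : ℤ := round ((-β * w₁ + α * w₂) / rr ^ 2) with hn₂
    clear_value w₁ w₂
    have hiR : (i:ℝ) + 1 ≤ (N₁:ℝ) := by exact_mod_cast hi
    have hmR : (m:ℝ) + 1 ≤ (N₂:ℝ) := by exact_mod_cast hm
    have hi0 : (0:ℝ) ≤ (i:ℝ) := Nat.cast_nonneg _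
    have hm0 : (0:ℝ) ≤ (m:ℝ) := Nat.cast_nonneg _
    have hpR1 : -(P:ℝ) ≤ (p:ℝ) := by exact_mod_cast hp1
    have hpR2 : (p:ℝ) ≤ (P:ℝ) := by exact_mod_cast hp2
    have hpqR1 : -(P:ℝ) ≤ (pq:ℝ) := by exact_mod_cast hpq1
    have hpqR2 : (pq:ℝ) ≤ (P:ℝ) := by exact_mod_cast hpq2
    have hirr : (1+3*(i:ℝ))*rr + rr ≤ t₁/2 := by
      have hmul : ((i:ℝ)+1)*rr ≤ (N₁:ℝ)*rr := mul_le_mul_of_nonneg_right hiR hrr.le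
      linarith only [hmul, hN₁u, hrr.le]
    have hmrr : (1+3*(m:ℝ))*rr + rr ≤ t₂/2 := by
      have hmul : ((m:ℝ)+1)*rr ≤ (N₂:ℝ)*rr := mul_le_mul_of_nonneg_right hmR hrr.le
      linarith only [hmul, hN₂u, hrr.le]
    have hirr0 : 0 ≤ (1+3*(i:ℝ))*rr := by positivity
    have hmrr0 : 0 ≤ (1+3*(m:ℝ))*rr := by positivity
    have habsw₁ : |w₁| ≤ (P:ℝ) + 1 := by
      rw [hw₁, abs_le]
      constructor
      · linarith only [hpR1, ht₁.le, hirr0]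
      · linarith only [hpR2, hirr, ht₁', hrr.le]
    have habsw₂ : |w₂| ≤ (P:ℝ) + 1 := by
      rw [hw₂, abs_le]
      constructor
      · linarith only [hpqR1, ht₂.le, hmrr0]
      · linarith only [hpqR2, hmrr, ht₂', hrr.le]
    have hUabs := abs_le.1 k1
    have hVabs := abs_le.1 k2
    have hU1 : (p:ℝ) + t₁/4 + 3*(i:ℝ)*rr ≤ (n₁:ℝ)*α - (n₂:ℝ)*β := by
      linarith only [hUabs.1, hw₁]
    have hU2 : (n₁:ℝ)*α - (n₂:ℝ)*β ≤ (p:ℝ) + t₁/4 + (3*(i:ℝ)+2)*rr := by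
      linarith only [hUabs.2, hw₁]
    have hV1 : (pq:ℝ) + t₂/4 + 3*(m:ℝ)*rr ≤ (n₁:ℝ)*β + (n₂:ℝ)*α := by
      linarith only [hVabs.1, hw₂]
    have hV2 : (n₁:ℝ)*β + (n₂:ℝ)*α ≤ (pq:ℝ) + t₂/4 + (3*(m:ℝ)+2)*rr := by
      linarith only [hVabs.2, hw₂]
    have hU2' : (n₁:ℝ)*α - (n₂:ℝ)*β ≤ (p:ℝ) + 3*t₁/4 := by
      linarith only [hU2, hirr]
    have hV2' : (n₁:ℝ)*β + (n₂:ℝ)*α ≤ (pq:ℝ) + 3*t₂/4 := by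
      linarith only [hV2, hmrr]
    have hU1' : (p:ℝ) + t₁/4 ≤ (n₁:ℝ)*α - (n₂:ℝ)*β := by
      linarith only [hU1, mul_nonneg hi0 hrr.le]
    have hV1' : (pq:ℝ) + t₂/4 ≤ (n₁:ℝ)*β + (n₂:ℝ)*α := by
      linarith only [hV1, mul_nonneg hm0 hrr.le]
    have hfl1 : ⌊(n₁:ℝ)*α - (n₂:ℝ)*β⌋ = p :=
      Int.floor_eq_iff.2 ⟨by linarith only [hU1', ht₁.le], by linarith only [hU2', ht₁']⟩
    have hfl2 : ⌊(n₁:ℝ)*β + (n₂:ℝ)*α⌋ = pq :=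
      Int.floor_eq_iff.2 ⟨by linarith only [hV1', ht₂.le], by linarith only [hV2', ht₂']⟩
    have hfr1 : Int.fract ((n₁:ℝ)*α - (n₂:ℝ)*β) < t₁ := by
      rw [← Int.self_sub_floor, hfl1]; linarith only [hU2', ht₁]
    have hfr2 : Int.fract ((n₁:ℝ)*β + (n₂:ℝ)*α) < t₂ := by
      rw [← Int.self_sub_floor, hfl2]; linarith only [hV2', ht₂]
    have hww : |w₁| + |w₂| ≤ rr * ((J:ℝ) - 1) := by
      linarith only [habsw₁, habsw₂, hPu, hrJ, hrr1]
    have hJb : (|w₁| + |w₂|) / rr + 1 ≤ (J:ℝ) := by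
      have h7 : (|w₁| + |w₂|) / rr ≤ (J:ℝ) - 1 := by
        rw [div_le_iff₀ hrr]; linarith only [hww]
      linarith only [h7]
    have hn₁J : |n₁| ≤ (J:ℤ) := by
      have : |(n₁:ℝ)| ≤ (J:ℝ) := le_trans k3 hJb
      exact_mod_cast this
    have hn₂J : |n₂| ≤ (J:ℤ) := by
      have : |(n₂:ℝ)| ≤ (J:ℝ) := le_trans k4 hJb
      exact_mod_cast this
    exact ⟨n₁, n₂, by rw [hn₁, hw₁, hw₂], by rw [hn₂, hw₁, hw₂], hn₁J, hn₂J,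
      hU1, hU2, hV1, hV2, hfl1, hfl2, hfr1, hfr2⟩
  -- the injection
  have hqZ : ((q:ℤ)) ≠ 0 := by exact_mod_cast hq0.ne'
  set F : (ℤ × ℤ) × ℕ × ℕ → ℤ × ℤ := fun e =>
    ((q:ℤ) * round ((α * ((e.1.1:ℝ) + t₁/4 + (1+3*(e.2.1:ℝ))*rr) +
        β * ((e.1.2:ℝ) + t₂/4 + (1+3*(e.2.2:ℝ))*rr)) / rr ^ 2),
     (q:ℤ) * round ((-β * ((e.1.1:ℝ) + t₁/4 + (1+3*(e.2.1:ℝ))*rr) +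
        α * ((e.1.2:ℝ) + t₂/4 + (1+3*(e.2.2:ℝ))*rr)) / rr ^ 2)) with hF
  set I := (Finset.Icc (-(P:ℤ)) (P:ℤ) ×ˢ Finset.Icc (-(P:ℤ)) (P:ℤ)) ×ˢ
      (Finset.range N₁ ×ˢ Finset.range N₂) with hI
  have hmapsto : ∀ e ∈ I, F e ∈ (Finset.Icc (-(M : ℤ), -(M : ℤ)) ((M : ℤ), (M : ℤ))).filter
      (fun x => Int.fract ((x.1 : ℝ) * Real.cos φ - (x.2 : ℝ) * Real.sin φ) < t₁ ∧
        Int.fract ((x.1 : ℝ) * Real.sin φ + (x.2 : ℝ) * Real.cos φ) < t₂) := by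
    rintro ⟨⟨p, pq⟩, i, m⟩ he
    simp only [hI, Finset.mem_product, Finset.mem_Icc, Finset.mem_range] at he
    obtain ⟨⟨⟨hp1, hp2⟩, hpq1, hpq2⟩, hi, hm⟩ := he
    obtain ⟨n₁, n₂, hn₁, hn₂, hJ1, hJ2, hU1, hU2, hV1, hV2, hfl1, hfl2, hfr1, hfr2⟩ :=
      helem p pq i m hp1 hp2 hpq1 hpq2 hi hm
    have hFe : F ((p, pq), i, m) = ((q:ℤ) * n₁, (q:ℤ) * n₂) := by
      simp only [hF]
      rw [hn₁, hn₂]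
    rw [hFe]
    have h1 : |(q:ℤ) * n₁| ≤ (M:ℤ) := by
      rw [abs_mul, abs_of_nonneg (by positivity : (0:ℤ) ≤ (q:ℤ))]
      calc (q:ℤ) * |n₁| ≤ (q:ℤ) * (J:ℤ) := mul_le_mul_of_nonneg_left hJ1 (by positivity)
        _ ≤ (M:ℤ) := by exact_mod_cast hqJM
    have h2 : |(q:ℤ) * n₂| ≤ (M:ℤ) := by
      rw [abs_mul, abs_of_nonneg (by positivity : (0:ℤ) ≤ (q:ℤ))]
      calc (q:ℤ) * |n₂| ≤ (q:ℤ) * (J:ℤ) := mul_le_mul_of_nonneg_left hJ2 (by positivity)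
        _ ≤ (M:ℤ) := by exact_mod_cast hqJM
    refine Finset.mem_filter.2 ⟨?_, ?_, ?_⟩
    · exact Finset.mem_Icc.2 ⟨Prod.mk_le_mk.2 ⟨(abs_le.1 h1).1, (abs_le.1 h2).1⟩,
        Prod.mk_le_mk.2 ⟨(abs_le.1 h1).2, (abs_le.1 h2).2⟩⟩
    · show Int.fract ((((q:ℤ) * n₁ : ℤ) : ℝ) * Real.cos φ -
        (((q:ℤ) * n₂ : ℤ) : ℝ) * Real.sin φ) < t₁
      rw [hfract1 n₁ n₂]; exact hfr1
    · show Int.fract ((((q:ℤ) * n₁ : ℤ) : ℝ) * Real.sin φ +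
        (((q:ℤ) * n₂ : ℤ) : ℝ) * Real.cos φ) < t₂
      rw [hfract2 n₁ n₂]; exact hfr2
  have hinj : Set.InjOn F ↑I := by
    rintro ⟨⟨p, pq⟩, i, m⟩ he ⟨⟨p', pq'⟩, i', m'⟩ he' heq
    rw [Finset.mem_coe] at he he'
    simp only [hI, Finset.mem_product, Finset.mem_Icc, Finset.mem_range] at he he'
    obtain ⟨⟨⟨hp1, hp2⟩, hpq1, hpq2⟩, hi, hm⟩ := he
    obtain ⟨⟨⟨hp1', hp2'⟩, hpq1', hpq2'⟩, hi', hm'⟩ := he'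
    obtain ⟨n₁, n₂, hn₁, hn₂, hJ1, hJ2, hU1, hU2, hV1, hV2, hfl1, hfl2, hfr1, hfr2⟩ :=
      helem p pq i m hp1 hp2 hpq1 hpq2 hi hm
    obtain ⟨n₁', n₂', hn₁', hn₂', hJ1', hJ2', hU1', hU2', hV1', hV2', hfl1', hfl2', hfr1', hfr2'⟩ :=
      helem p' pq' i' m' hp1' hp2' hpq1' hpq2' hi' hm'
    have hFe : F ((p, pq), i, m) = ((q:ℤ) * n₁, (q:ℤ) * n₂) := by
      simp only [hF]; rw [hn₁, hn₂]
    have hFe' : F ((p', pq'), i', m') = ((q:ℤ) * n₁', (q:ℤ) * n₂') := by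
      simp only [hF]; rw [hn₁', hn₂']
    rw [hFe, hFe', Prod.mk.injEq] at heq
    have hne₁ : n₁ = n₁' := mul_left_cancel₀ hqZ heq.1
    have hne₂ : n₂ = n₂' := mul_left_cancel₀ hqZ heq.2
    rw [← hne₁, ← hne₂] at hU1' hU2' hV1' hV2' hfl1' hfl2'
    have hpp : p = p' := by rw [← hfl1, ← hfl1']
    have hqq : pq = pq' := by rw [← hfl2, ← hfl2']
    have hppR : (p:ℝ) = (p':ℝ) := by exact_mod_cast hpp
    have hqqR : (pq:ℝ) = (pq':ℝ) := by exact_mod_cast hqq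
    have hii : i = i' := by
      rcases lt_trichotomy i i' with h | h | h
      · exfalso
        have hc : (i:ℝ) + 1 ≤ (i':ℝ) := by exact_mod_cast h
        have h9 := mul_le_mul_of_nonneg_right hc hrr.le
        linarith only [hU2, hU1', hppR, h9, hrr]
      · exact h
      · exfalso
        have hc : (i':ℝ) + 1 ≤ (i:ℝ) := by exact_mod_cast h
        have h9 := mul_le_mul_of_nonneg_right hc hrr.le
        linarith only [hU2', hU1, hppR, h9, hrr]
    have hmm : m = m' := by
      rcases lt_trichotomy m m' with h | h | h
      · exfalso
        have hc : (m:ℝ) + 1 ≤ (m':ℝ) := by exact_mod_cast h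
        have h9 := mul_le_mul_of_nonneg_right hc hrr.le
        linarith only [hV2, hV1', hqqR, h9, hrr]
      · exact h
      · exfalso
        have hc : (m':ℝ) + 1 ≤ (m:ℝ) := by exact_mod_cast h
        have h9 := mul_le_mul_of_nonneg_right hc hrr.le
        linarith only [hV2', hV1, hqqR, h9, hrr]
    simp only [Prod.mk.injEq]
    exact ⟨⟨hpp, hqq⟩, hii, hmm⟩
  -- counting
  have hcardle : I.card ≤ Scount φ t₁ t₂ M := by
    rw [Scount_eq]
    exact Finset.card_le_card_of_injOn F hmapsto hinj
  have hIcard : I.card = ((2*P+1) * (2*P+1)) * (N₁ * N₂) := by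
    rw [hI, Finset.card_product, Finset.card_product, Finset.card_product,
      Int.card_Icc, Finset.card_range, Finset.card_range]
    have h8 : ((P:ℤ) + 1 - -(P:ℤ)).toNat = 2*P+1 := by omega
    rw [h8]
  have hNlb₁ : t₁/(12*rr) ≤ (N₁:ℝ) := by
    rw [div_le_iff₀ (by positivity)]; linarith only [hN₁l]
  have hNlb₂ : t₂/(12*rr) ≤ (N₂:ℝ) := by
    rw [div_le_iff₀ (by positivity)]; linarith only [hN₂l]
  have hMq2J : (M:ℝ)/q ≤ 2*(J:ℝ) := by
    rw [div_le_iff₀ hq0R]; linarith only [hMJ]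
  have hfinal : (((2*P+1) * (2*P+1)) * (N₁ * N₂) : ℕ) ≤ (Scount φ t₁ t₂ M : ℕ) := hIcard ▸ hcardle
  calc t₁*t₂/36864*((M:ℝ)/q)^2 ≤ t₁*t₂/36864*(2*(J:ℝ))^2 := by
        gcongr
    _ = (rr*(J:ℝ)/8) * (rr*(J:ℝ)/8) * ((t₁/(12*rr)) * (t₂/(12*rr))) := by
        field_simp
        ring
    _ ≤ ((2*(P:ℝ)+1) * (2*(P:ℝ)+1)) * ((N₁:ℝ) * (N₂:ℝ)) := by
        have c0 : (0:ℝ) ≤ rr*(J:ℝ)/8 := by positivity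
        have c1 : (0:ℝ) ≤ t₁/(12*rr) := by positivity
        have c2 : (0:ℝ) ≤ t₂/(12*rr) := by positivity
        gcongr
    _ = ((((2*P+1) * (2*P+1)) * (N₁ * N₂) : ℕ) : ℝ) := by push_cast; ring
    _ ≤ ((Scount φ t₁ t₂ M : ℕ) : ℝ) := Nat.cast_le.2 hfinal

theorem main_lemma_generic (φ t₁ t₂ : ℝ) (ht₁ : 0 < t₁) (ht₁' : t₁ ≤ 1)
    (ht₂ : 0 < t₂) (ht₂' : t₂ ≤ 1)
    (hφ : ∀ k : ℤ, φ ≠ (k : ℝ) * (Real.pi / 2)) (hexc : ¬ Exceptional φ) :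
    ∃ c₁ c₂ : ℝ, 0 < c₁ ∧ 0 < c₂ ∧ ∃ M₀ : ℕ, 0 < M₀ ∧
      ∀ M : ℕ, M₀ ≤ M → c₁ * (M : ℝ) ^ 2 ≤ (Scount φ t₁ t₂ M : ℝ) ∧
        (Scount φ t₁ t₂ M : ℝ) ≤ c₂ * (M : ℝ) ^ 2 := by
  classical
  have ht : 0 < min t₁ t₂ := lt_min ht₁ ht₂
  set K : ℕ := ⌈(200:ℝ) / min t₁ t₂⌉₊ with hKdef
  have hK0 : 0 < K := Nat.ceil_pos.2 (by positivity)
  have hKR : (0:ℝ) < K := by exact_mod_cast hK0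
  have hK200 : (200:ℝ) / min t₁ t₂ ≤ K := Nat.le_ceil _
  have hKinv : 1 / (K:ℝ) ≤ min t₁ t₂ / 200 := by
    rw [div_le_div_iff₀ hKR (by norm_num)]
    rw [div_le_iff₀ ht] at hK200
    linarith
  obtain ⟨q, hq0, hqK, A, B, α, β, hα, hβ, hA, hB⟩ :=
    exists_good_q (Real.cos φ) (Real.sin φ) K hK0
  have hq0R : (0:ℝ) < q := by exact_mod_cast hq0
  have hmin1 : min t₁ t₂ ≤ t₁ := min_le_left _ _
  have hmin2 : min t₁ t₂ ≤ t₂ := min_le_right _ _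
  have hα1 : |α| ≤ t₁ / 200 := by linarith [hα.le.trans hKinv]
  have hα2 : |α| ≤ t₂ / 200 := by linarith [hα.le.trans hKinv]
  have hβ1 : |β| ≤ t₁ / 200 := by linarith [hβ.le.trans hKinv]
  have hβ2 : |β| ≤ t₂ / 200 := by linarith [hβ.le.trans hKinv]
  have hqKR : (q:ℝ) ≤ (K:ℝ)^2 := by exact_mod_cast hqK
  -- upper bound
  have hub : ∀ M : ℕ, 1 ≤ M → (Scount φ t₁ t₂ M : ℝ) ≤ 9 * (M:ℝ)^2 := by
    intro M hM
    have h1 : Scount φ t₁ t₂ M ≤ (2*M+1)*(2*M+1) := by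
      rw [Scount_eq]
      calc ((Finset.Icc (-(M : ℤ), -(M : ℤ)) ((M : ℤ), (M : ℤ))).filter _).card
          ≤ (Finset.Icc (-(M : ℤ), -(M : ℤ)) ((M : ℤ), (M : ℤ))).card :=
            Finset.card_filter_le _ _
        _ = (2*M+1)*(2*M+1) := by
            rw [Finset.Icc_prod_def, Finset.card_product]
            simp only [Int.card_Icc]
            have h9 : ((M:ℤ) + 1 - -(M:ℤ)).toNat = 2*M+1 := by omega
            rw [h9]
    have h2 : (2*M+1)*(2*M+1) ≤ 9*M^2 := by nlinarith [hM]
    calc (Scount φ t₁ t₂ M : ℝ) ≤ (((2*M+1)*(2*M+1) : ℕ) : ℝ) := Nat.cast_le.2 h1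
      _ ≤ ((9*M^2 : ℕ) : ℝ) := Nat.cast_le.2 h2
      _ = 9*(M:ℝ)^2 := by push_cast; ring
  have ht₁t₂ : t₁ * t₂ ≤ 1 := by nlinarith
  set c₁ : ℝ := t₁ * t₂ / (36864 * (K:ℝ)^4) with hc₁
  have hc₁pos : 0 < c₁ := by rw [hc₁]; positivity
  by_cases hz : α = 0 ∧ β = 0
  · refine ⟨c₁, 9, hc₁pos, by norm_num, 1, one_pos, ?_⟩
    intro M hM
    have hA' : (q : ℝ) * Real.cos φ = A := by rw [hA, hz.1, add_zero]
    have hB' : (q : ℝ) * Real.sin φ = B := by rw [hB, hz.2, add_zero]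
    have h := case1 φ t₁ t₂ q A B ht₁ ht₂ hq0 hA' hB' M
    refine ⟨?_, hub M hM⟩
    have hq2K4 : (q:ℝ)^2 ≤ (K:ℝ)^4 := by nlinarith [hq0R.le]
    have key : c₁ * (M:ℝ)^2 ≤ ((M:ℝ)/(2*q))^2 := by
      rw [hc₁]
      rw [div_pow, div_mul_eq_mul_div, div_le_div_iff₀ (by positivity) (by positivity)]
      have e1 : (0:ℝ) ≤ (M:ℝ)^2 := by positivity
      nlinarith [mul_le_mul_of_nonneg_right ht₁t₂
          (mul_nonneg e1 (by positivity : (0:ℝ) ≤ (2*(q:ℝ))^2)),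
        mul_le_mul_of_nonneg_right hq2K4 e1]
    linarith
  · obtain ⟨M₀, hM₀, h⟩ := case2 φ t₁ t₂ α β q A B ht₁ ht₁' ht₂ ht₂' hq0 hA hB hα1 hα2 hβ1 hβ2 hz
    refine ⟨c₁, 9, hc₁pos, by norm_num, M₀, hM₀, ?_⟩
    intro M hM
    refine ⟨?_, hub M (le_trans hM₀ hM)⟩
    have hMK : (M:ℝ)/(K:ℝ)^2 ≤ (M:ℝ)/q := by
      gcongr
    have key : c₁ * (M:ℝ)^2 ≤ t₁ * t₂ / 36864 * ((M:ℝ)/q)^2 := by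
      have h5 : c₁ * (M:ℝ)^2 = t₁ * t₂ / 36864 * ((M:ℝ)/(K:ℝ)^2)^2 := by
        rw [hc₁, div_pow, div_mul_div_comm, show ((K:ℝ)^2)^2 = (K:ℝ)^4 by ring]
        ring
      have h6 : ((M:ℝ)/(K:ℝ)^2)^2 ≤ ((M:ℝ)/q)^2 :=
        pow_le_pow_left₀ (by positivity) hMK 2
      rw [h5]
      exact mul_le_mul_of_nonneg_left h6 (by positivity)
    linarith [h M hM]
end

section
/- Let 0 < t₁, t₂ ≤ 1 and let φ ∈ ℝ be an angle that is not an integer multiple of π/2 and that is not exceptional. Then there exist real constants c₁, c₂ > 0 (depending only on φ, t₁, t₂) and a positive integer M₀ such that for every integer M ≥ M₀, the number of pairs (x₁,x₂) ∈ ℤ² with x₁ and x₂ both odd, |x₁| ≤ M, |x₂| ≤ M, {x₁·cos φ − x₂·sin φ} < t₁ and {x₁·sin φ + x₂·cos φ} < t₂ lies between c₁·M² and c₂·M². -/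
/-- Reduce a Pythagorean triple so that not both legs are even. -/
lemma reduce_pyth : ∀ (N : ℕ) (g h r : ℤ), r.natAbs ≤ N → r ≠ 0 → g^2 + h^2 = r^2 →
    ∃ g' h' r' : ℤ, r' ≠ 0 ∧ g'^2 + h'^2 = r'^2 ∧ (g:ℝ)/r = g'/r' ∧ (h:ℝ)/r = h'/r' ∧
      ¬(Even g' ∧ Even h') := by
  intro N
  induction N with
  | zero => intro g h r hN hr _; exact absurd (Int.natAbs_eq_zero.mp (Nat.le_zero.mp hN)) hr
  | succ n ih =>
    intro g h r hN hr hpy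
    by_cases hev : Even g ∧ Even h
    · obtain ⟨⟨a, ha⟩, ⟨b, hb⟩⟩ := hev
      have hrev : Even r := by
        rcases Int.even_or_odd r with he | ho
        · exact he
        · exfalso; obtain ⟨e, he⟩ := ho; subst ha hb he
          have h4 : 4*(a^2 + b^2) = 4*(e^2+e) + 1 := by ring_nf; ring_nf at hpy; linarith
          have h5 : 0 = 0 := rfl
          set X := a^2 + b^2; set Y := e^2 + e; omega
      obtain ⟨e, hre⟩ := hrev
      have hre' : r = 2 * e := by omega
      have he0 : e ≠ 0 := by omega
      have hpy' : a^2 + b^2 = e^2 := by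
        subst ha hb; rw [hre'] at hpy; nlinarith
      have hN' : e.natAbs ≤ n := by omega
      obtain ⟨g', h', r', h1, h2, h3, h4, h5⟩ := ih a b e hN' he0 hpy'
      have heR : (e:ℝ) ≠ 0 := Int.cast_ne_zero.mpr he0
      refine ⟨g', h', r', h1, h2, ?_, ?_, h5⟩
      · rw [← h3]; subst ha; rw [hre']; push_cast; field_simp; ring
      · rw [← h4]; subst hb; rw [hre']; push_cast; field_simp; ring
    · exact ⟨g, h, r, hr, hpy, rfl, rfl, hev⟩

lemma odd_legs (g h r : ℤ) (hpy : g^2 + h^2 = r^2) (hne : ¬(Even g ∧ Even h)) :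
    Odd (g + h) ∧ Odd (g - h) := by
  have hno : ¬(Odd g ∧ Odd h) := by
    rintro ⟨⟨a, ha⟩, ⟨b, hb⟩⟩
    subst ha hb
    rcases Int.even_or_odd r with ⟨e, hee⟩ | ⟨e, hee⟩ <;> subst hee
    · have h4 : 4*(a^2+a+b^2+b) + 2 = 4*e^2 := by ring_nf; ring_nf at hpy; linarith
      set X := a^2+a+b^2+b; set Y := e^2; omega
    · have h4 : 4*(a^2+a+b^2+b) + 2 = 4*(e^2+e) + 1 := by ring_nf; ring_nf at hpy; linarith
      set X := a^2+a+b^2+b; set Y := e^2+e; omega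
  rcases Int.even_or_odd g with hg | hg <;> rcases Int.even_or_odd h with hh | hh
  · exact absurd ⟨hg, hh⟩ hne
  · exact ⟨hg.add_odd hh, hg.sub_odd hh⟩
  · exact ⟨hg.add_even hh, hg.sub_even hh⟩
  · exact absurd ⟨hg, hh⟩ hno


lemma abs_floor_sub_le (x : ℝ) : |(⌊x⌋:ℝ) - x| ≤ 1 := by
  rw [abs_le]
  constructor
  · linarith [Int.lt_floor_add_one x]
  · linarith [Int.floor_le x]

/-- Cell lemma, rational case. -/
lemma cellA (c s t₁ t₂ : ℝ) (ht₁ : 0 < t₁) (ht₂ : 0 < t₂)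
    (g h r : ℤ) (hr : r ≠ 0) (hpy : g^2 + h^2 = r^2)
    (hc : c = (g:ℝ)/r) (hs : s = (h:ℝ)/r)
    (hG : Odd (g + h)) (hH : Odd (g - h)) :
    ∃ B : ℕ, 0 < B ∧ ∀ u₀ v₀ : ℤ, ∃ u v : ℤ, |u - u₀| ≤ (B:ℤ) ∧ |v - v₀| ≤ (B:ℤ) ∧
      Int.fract (((2*u+1 : ℤ):ℝ) * c - ((2*v+1 : ℤ):ℝ) * s) < t₁ ∧
      Int.fract (((2*u+1 : ℤ):ℝ) * s + ((2*v+1 : ℤ):ℝ) * c) < t₂ := by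
  have hrR : (r:ℝ) ≠ 0 := Int.cast_ne_zero.mpr hr
  have hpyR : (g:ℝ)^2 + (h:ℝ)^2 = (r:ℝ)^2 := by exact_mod_cast hpy
  obtain ⟨a, haa⟩ := hG
  obtain ⟨b, hbb⟩ := hH
  have haaR : (g:ℝ) + h = 2*a + 1 := by exact_mod_cast haa
  have hbbR : (g:ℝ) - h = 2*b + 1 := by exact_mod_cast hbb
  refine ⟨((g+h).natAbs + (g-h).natAbs + 1), by positivity, ?_⟩
  intro u₀ v₀
  set Astar : ℝ := (((g:ℝ)+h)*((u₀:ℝ)-a) + ((g:ℝ)-h)*((v₀:ℝ)-b))/(2*(r:ℝ)^2) with hAstar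
  set Bstar : ℝ := (((g:ℝ)+h)*((v₀:ℝ)-b) - ((g:ℝ)-h)*((u₀:ℝ)-a))/(2*(r:ℝ)^2) with hBstar
  set A : ℤ := ⌊Astar⌋ with hA
  set Bq : ℤ := ⌊Bstar⌋ with hB
  have hid1 : ((g:ℝ)+h)*Astar - ((g:ℝ)-h)*Bstar = (u₀:ℝ) - a := by
    rw [hAstar, hBstar]
    field_simp
    linear_combination (2*((u₀:ℝ)-a)) * hpyR
  have hid2 : ((g:ℝ)+h)*Bstar + ((g:ℝ)-h)*Astar = (v₀:ℝ) - b := by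
    rw [hAstar, hBstar]
    field_simp
    linear_combination (2*((v₀:ℝ)-b)) * hpyR
  have h1 : |(A:ℝ) - Astar| ≤ 1 := abs_floor_sub_le Astar
  have h2 : |(Bq:ℝ) - Bstar| ≤ 1 := abs_floor_sub_le Bstar
  have habs : ∀ x y : ℝ, |x - y| ≤ 1 → ∀ w : ℝ, |w * (x - y)| ≤ |w| := by
    intro x y hxy w
    rw [abs_mul]
    calc |w| * |x - y| ≤ |w| * 1 := mul_le_mul_of_nonneg_left hxy (abs_nonneg w)
      _ = |w| := mul_one _
  have hcast : (((g+h).natAbs + (g-h).natAbs + 1 : ℕ):ℝ) = |(g:ℝ)+h| + |(g:ℝ)-h| + 1 := by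
    push_cast [Nat.cast_natAbs]
    push_cast
    ring
  refine ⟨a + (g+h)*A - (g-h)*Bq, b + (g+h)*Bq + (g-h)*A, ?_, ?_, ?_, ?_⟩
  · have key : ((|a + (g+h)*A - (g-h)*Bq - u₀| : ℤ):ℝ) ≤ ((((g+h).natAbs + (g-h).natAbs + 1 : ℕ):ℤ):ℝ) := by
      have heq : ((a + (g+h)*A - (g-h)*Bq - u₀ : ℤ):ℝ)
          = ((g:ℝ)+h)*((A:ℝ) - Astar) - ((g:ℝ)-h)*((Bq:ℝ) - Bstar) := by
        push_cast
        linear_combination hid1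
      rw [Int.cast_abs, heq]
      have hb1 : |((g:ℝ)+h)*((A:ℝ) - Astar) - ((g:ℝ)-h)*((Bq:ℝ) - Bstar)|
          ≤ |(g:ℝ)+h| + |(g:ℝ)-h| :=
        (abs_sub _ _).trans (add_le_add (habs _ _ h1 _) (habs _ _ h2 _))
      have : ((((g+h).natAbs + (g-h).natAbs + 1 : ℕ):ℤ):ℝ) = |(g:ℝ)+h| + |(g:ℝ)-h| + 1 := by
        push_cast [Nat.cast_natAbs]
        push_cast
        ring
      rw [this]
      linarith
    exact Int.cast_le.mp key
  · have key : ((|b + (g+h)*Bq + (g-h)*A - v₀| : ℤ):ℝ) ≤ ((((g+h).natAbs + (g-h).natAbs + 1 : ℕ):ℤ):ℝ) := by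
      have heq : ((b + (g+h)*Bq + (g-h)*A - v₀ : ℤ):ℝ)
          = ((g:ℝ)+h)*((Bq:ℝ) - Bstar) + ((g:ℝ)-h)*((A:ℝ) - Astar) := by
        push_cast
        linear_combination hid2
      rw [Int.cast_abs, heq]
      have hb1 : |((g:ℝ)+h)*((Bq:ℝ) - Bstar) + ((g:ℝ)-h)*((A:ℝ) - Astar)|
          ≤ |(g:ℝ)+h| + |(g:ℝ)-h| :=
        (abs_add_le _ _).trans (add_le_add (habs _ _ h2 _) (habs _ _ h1 _))
      have : ((((g+h).natAbs + (g-h).natAbs + 1 : ℕ):ℤ):ℝ) = |(g:ℝ)+h| + |(g:ℝ)-h| + 1 := by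
        push_cast [Nat.cast_natAbs]
        push_cast
        ring
      rw [this]
      linarith
    exact Int.cast_le.mp key
  · have hx : ((2*(a + (g+h)*A - (g-h)*Bq)+1 : ℤ):ℝ) * c - ((2*(b + (g+h)*Bq + (g-h)*A)+1 : ℤ):ℝ) * s
        = ((r*(1+2*A-2*Bq) : ℤ):ℝ) := by
      rw [hc, hs]
      field_simp
      push_cast
      linear_combination (-(g:ℝ)) * haaR + (h:ℝ) * hbbR + (1+2*(A:ℝ)-2*(Bq:ℝ)) * hpyR
    rw [hx, Int.fract_intCast]
    exact ht₁
  · have hx : ((2*(a + (g+h)*A - (g-h)*Bq)+1 : ℤ):ℝ) * s + ((2*(b + (g+h)*Bq + (g-h)*A)+1 : ℤ):ℝ) * c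
        = ((r*(1+2*A+2*Bq) : ℤ):ℝ) := by
      rw [hc, hs]
      field_simp
      push_cast
      linear_combination (-(h:ℝ)) * haaR + (-(g:ℝ)) * hbbR + (1+2*(A:ℝ)+2*(Bq:ℝ)) * hpyR
    rw [hx, Int.fract_intCast]
    exact ht₂

/-- One short non-trivial vector in the orbit, by pigeonhole. -/
lemma small_vec (c s : ℝ) (δ : ℝ) (hδ : 0 < δ) :
    ∃ (m K₁ K₂ : ℤ), m ≠ 0 ∧ |2*(m:ℝ)*c + K₁| ≤ δ ∧ |2*(m:ℝ)*s + K₂| ≤ δ := by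
  obtain ⟨K, hK1, hKδ⟩ : ∃ K : ℕ, 1 ≤ K ∧ 1/(K:ℝ) ≤ δ := by
    refine ⟨max 1 ⌈1/δ⌉₊, le_max_left _ _, ?_⟩
    rw [div_le_iff₀ (by positivity)]
    have h1 : 1/δ ≤ (⌈1/δ⌉₊ : ℝ) := Nat.le_ceil _
    have h2 : ((⌈1/δ⌉₊ : ℕ):ℝ) ≤ ((max 1 ⌈1/δ⌉₊ : ℕ):ℝ) := by exact_mod_cast le_max_right _ _
    calc (1:ℝ) = δ * (1/δ) := by field_simp
      _ ≤ δ * ((max 1 ⌈1/δ⌉₊ : ℕ):ℝ) := by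
          apply mul_le_mul_of_nonneg_left _ hδ.le
          linarith
  have hKR : (0:ℝ) < K := by exact_mod_cast hK1
  set F : ℕ → ℤ × ℤ :=
    fun n => (⌊(K:ℝ) * Int.fract (2*(n:ℝ)*c)⌋, ⌊(K:ℝ) * Int.fract (2*(n:ℝ)*s)⌋) with hF
  have hbound : ∀ x : ℝ, ⌊(K:ℝ) * Int.fract x⌋ ∈ Finset.Icc (0:ℤ) ((K:ℤ)-1) := by
    intro x
    rw [Finset.mem_Icc]
    refine ⟨Int.floor_nonneg.mpr (mul_nonneg hKR.le (Int.fract_nonneg x)), ?_⟩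
    have hlt : (K:ℝ) * Int.fract x < K := by
      have h1 := Int.fract_lt_one x
      nlinarith
    have : ⌊(K:ℝ) * Int.fract x⌋ < (K:ℤ) := Int.floor_lt.mpr (by exact_mod_cast hlt)
    omega
  have hmaps : ∀ n ∈ Finset.range (K^2+1), F n ∈ Finset.Icc ((0:ℤ),(0:ℤ)) ((K:ℤ)-1, (K:ℤ)-1) := by
    intro n _
    rw [Finset.mem_Icc, Prod.mk_le_mk, Prod.mk_le_mk]
    have h1 := hbound (2*(n:ℝ)*c)
    have h2 := hbound (2*(n:ℝ)*s)
    rw [Finset.mem_Icc] at h1 h2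
    exact ⟨⟨h1.1, h2.1⟩, ⟨h1.2, h2.2⟩⟩
  have hcard : (Finset.Icc ((0:ℤ),(0:ℤ)) ((K:ℤ)-1, (K:ℤ)-1)).card < (Finset.range (K^2+1)).card := by
    rw [Finset.card_range, Finset.card_Icc_prod]
    simp only [Int.card_Icc]
    have : ((K:ℤ) - 1 + 1 - 0).toNat = K := by omega
    rw [this]
    nlinarith
  obtain ⟨x, -, y, -, hxy, hFeq⟩ := Finset.exists_ne_map_eq_of_card_lt_of_maps_to hcard hmaps
  have habs : ∀ t u : ℝ, ⌊(K:ℝ) * Int.fract t⌋ = ⌊(K:ℝ) * Int.fract u⌋ →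
      |Int.fract t - Int.fract u| ≤ 1/K := by
    intro t u hfl
    have h1 := Int.floor_le ((K:ℝ) * Int.fract t)
    have h2 := Int.lt_floor_add_one ((K:ℝ) * Int.fract t)
    have h3 := Int.floor_le ((K:ℝ) * Int.fract u)
    have h4 := Int.lt_floor_add_one ((K:ℝ) * Int.fract u)
    rw [hfl] at h1 h2
    rw [abs_le]
    have h5 : (1/(K:ℝ)) * K = 1 := by field_simp
    constructor
    · nlinarith
    · nlinarith
  have hFeq1 : ⌊(K:ℝ) * Int.fract (2*(x:ℝ)*c)⌋ = ⌊(K:ℝ) * Int.fract (2*(y:ℝ)*c)⌋ := by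
    have := congrArg Prod.fst hFeq; simpa [hF] using this
  have hFeq2 : ⌊(K:ℝ) * Int.fract (2*(x:ℝ)*s)⌋ = ⌊(K:ℝ) * Int.fract (2*(y:ℝ)*s)⌋ := by
    have := congrArg Prod.snd hFeq; simpa [hF] using this
  refine ⟨(x:ℤ) - y, ⌊2*(y:ℝ)*c⌋ - ⌊2*(x:ℝ)*c⌋, ⌊2*(y:ℝ)*s⌋ - ⌊2*(x:ℝ)*s⌋, ?_, ?_, ?_⟩
  · intro hc0
    apply hxy
    exact_mod_cast sub_eq_zero.mp hc0
  · have heq : 2*(((x:ℤ) - y : ℤ):ℝ)*c + ((⌊2*(y:ℝ)*c⌋ - ⌊2*(x:ℝ)*c⌋ : ℤ):ℝ)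
        = Int.fract (2*(x:ℝ)*c) - Int.fract (2*(y:ℝ)*c) := by
      rw [Int.fract, Int.fract]
      push_cast
      ring
    rw [heq]
    exact (habs _ _ hFeq1).trans hKδ
  · have heq : 2*(((x:ℤ) - y : ℤ):ℝ)*s + ((⌊2*(y:ℝ)*s⌋ - ⌊2*(x:ℝ)*s⌋ : ℤ):ℝ)
        = Int.fract (2*(x:ℝ)*s) - Int.fract (2*(y:ℝ)*s) := by
      rw [Int.fract, Int.fract]
      push_cast
      ring
    rw [heq]
    exact (habs _ _ hFeq2).trans hKδ

lemma abs_floor_le (x : ℝ) : |(⌊x⌋:ℝ)| ≤ |x| + 1 := by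
  have h1 := Int.floor_le x
  have h2 := Int.lt_floor_add_one x
  rw [abs_le]
  constructor
  · have := neg_abs_le x; linarith
  · have := le_abs_self x; linarith


set_option maxHeartbeats 1000000 in
/-- Cell lemma, irrational case. -/
lemma cellB (c s t₁ t₂ : ℝ) (ht₁ : 0 < t₁) (ht₁' : t₁ ≤ 1) (ht₂ : 0 < t₂) (ht₂' : t₂ ≤ 1)
    (hirr : ¬((∃ q : ℚ, (q:ℝ) = c) ∧ (∃ q : ℚ, (q:ℝ) = s))) :
    ∃ B : ℕ, 0 < B ∧ ∀ u₀ v₀ : ℤ, ∃ u v : ℤ, |u - u₀| ≤ (B:ℤ) ∧ |v - v₀| ≤ (B:ℤ) ∧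
      Int.fract (((2*u+1 : ℤ):ℝ) * c - ((2*v+1 : ℤ):ℝ) * s) < t₁ ∧
      Int.fract (((2*u+1 : ℤ):ℝ) * s + ((2*v+1 : ℤ):ℝ) * c) < t₂ := by
  set δ : ℝ := min t₁ t₂ / 8 with hδdef
  have hδ : 0 < δ := by
    rw [hδdef]
    have := lt_min ht₁ ht₂
    positivity
  have hδt₁ : 2*δ ≤ t₁/4 := by
    rw [hδdef]
    have := min_le_left t₁ t₂
    linarith
  have hδt₂ : 2*δ ≤ t₂/4 := by
    rw [hδdef]
    have := min_le_right t₁ t₂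
    linarith
  clear_value δ
  obtain ⟨m, K₁, K₂, hm, hE1, hE2⟩ := small_vec c s δ hδ
  have hmR : ((m:ℝ)) ≠ 0 := Int.cast_ne_zero.mpr hm
  set θ₁ : ℝ := 2*(m:ℝ)*c + K₁ with hθ₁
  set θ₂ : ℝ := 2*(m:ℝ)*s + K₂ with hθ₂
  clear_value θ₁ θ₂
  set ρ : ℝ := θ₁^2 + θ₂^2 with hρdef
  have hρ : 0 < ρ := by
    have hρ0 : 0 ≤ ρ := by rw [hρdef]; positivity
    rcases lt_or_eq_of_le hρ0 with h | h
    · exact h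
    exfalso
    have h1 : θ₁ = 0 ∧ θ₂ = 0 := by
      have e0 : θ₁^2 + θ₂^2 = 0 := by rw [← hρdef, ← h]
      have e1 : θ₁^2 = 0 := by linarith [sq_nonneg θ₁, sq_nonneg θ₂]
      have e2 : θ₂^2 = 0 := by linarith [sq_nonneg θ₁, sq_nonneg θ₂]
      exact ⟨pow_eq_zero_iff (n := 2) (by norm_num) |>.mp e1,
        pow_eq_zero_iff (n := 2) (by norm_num) |>.mp e2⟩
    apply hirr
    constructor
    · refine ⟨(-K₁ : ℚ)/(2*(m:ℚ)), ?_⟩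
      have h2 := h1.1
      rw [hθ₁] at h2
      push_cast
      field_simp
      linarith
    · refine ⟨(-K₂ : ℚ)/(2*(m:ℚ)), ?_⟩
      have h2 := h1.2
      rw [hθ₂] at h2
      push_cast
      field_simp
      linarith
  clear_value ρ
  set A₀ : ℝ := 3*(|θ₁|+|θ₂|)/ρ + 1 with hA₀
  have hA₀pos : 0 < A₀ := by
    rw [hA₀]
    positivity
  have habs_bound : ∀ x y w z : ℝ, 0 < x → x ≤ 3 → 0 < y → y ≤ 3 →
      |x*w + y*z| ≤ 3*(|w|+|z|) := by
    intro x y w z hx hx3 hy hy3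
    calc |x*w + y*z| ≤ |x*w| + |y*z| := abs_add_le _ _
      _ = |x| * |w| + |y| * |z| := by rw [abs_mul, abs_mul]
      _ ≤ 3*|w| + 3*|z| := by
          rw [abs_of_pos hx, abs_of_pos hy]
          exact add_le_add (mul_le_mul_of_nonneg_right hx3 (abs_nonneg w))
            (mul_le_mul_of_nonneg_right hy3 (abs_nonneg z))
      _ ≤ 3*(|w|+|z|) := by rw [mul_add]
  clear_value A₀
  refine ⟨⌈A₀ * |(m:ℝ)|⌉₊ + 1, Nat.succ_pos _, ?_⟩
  intro u₀ v₀
  set f₀ : ℝ := (2*(u₀:ℝ)+1)*c - (2*(v₀:ℝ)+1)*s with hf₀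
  set g₀ : ℝ := (2*(u₀:ℝ)+1)*s + (2*(v₀:ℝ)+1)*c with hg₀
  set Ff : ℤ := ⌊f₀⌋ with hFf
  set Fg : ℤ := ⌊g₀⌋ with hFg
  have hfract_f : Int.fract f₀ = f₀ - (Ff:ℝ) := by rw [hFf, Int.fract]
  have hfract_g : Int.fract g₀ = g₀ - (Fg:ℝ) := by rw [hFg, Int.fract]
  set If : ℝ := Int.fract f₀ with hIf
  set Ig : ℝ := Int.fract g₀ with hIg
  have hIfb : 0 ≤ If ∧ If < 1 := by
    rw [hIf]; exact ⟨Int.fract_nonneg _, Int.fract_lt_one _⟩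
  have hIgb : 0 ≤ Ig ∧ Ig < 1 := by
    rw [hIg]; exact ⟨Int.fract_nonneg _, Int.fract_lt_one _⟩
  clear_value Ff Fg
  clear_value If Ig
  clear hIf hIg
  set g₁ : ℝ := t₁/2 + 1 - If with hg₁
  set g₂ : ℝ := t₂/2 + 1 - Ig with hg₂
  have hg₁b : 0 < g₁ ∧ g₁ ≤ 3 := by
    rw [hg₁]
    constructor <;> linarith [hIfb.1, hIfb.2]
  have hg₂b : 0 < g₂ ∧ g₂ ≤ 3 := by
    rw [hg₂]
    constructor <;> linarith [hIgb.1, hIgb.2]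
  clear_value g₁ g₂
  set α : ℝ := (g₁*θ₁ + g₂*θ₂)/ρ with hα
  set β : ℝ := (-(g₁*θ₂) + g₂*θ₁)/ρ with hβ
  have hidα : α*θ₁ - β*θ₂ = g₁ := by
    rw [hα, hβ, hρdef]
    have h0 : θ₁^2 + θ₂^2 ≠ 0 := by rw [← hρdef]; exact hρ.ne'
    field_simp
    ring
  have hidβ : α*θ₂ + β*θ₁ = g₂ := by
    rw [hα, hβ, hρdef]
    have h0 : θ₁^2 + θ₂^2 ≠ 0 := by rw [← hρdef]; exact hρ.ne'
    field_simp
    ring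
  have hαb : |α| ≤ A₀ - 1 := by
    rw [hα, hA₀, abs_div, abs_of_pos hρ]
    have hnum : |g₁*θ₁ + g₂*θ₂| ≤ 3*(|θ₁|+|θ₂|) :=
      habs_bound _ _ _ _ hg₁b.1 hg₁b.2 hg₂b.1 hg₂b.2
    have h6 : |g₁*θ₁ + g₂*θ₂|/ρ ≤ 3*(|θ₁|+|θ₂|)/ρ := by gcongr
    linarith
  have hβb : |β| ≤ A₀ - 1 := by
    rw [hβ, hA₀, abs_div, abs_of_pos hρ]
    have hnum : |(-(g₁*θ₂) + g₂*θ₁)| ≤ 3*(|θ₁|+|θ₂|) := by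
      have h7 := habs_bound g₂ g₁ θ₁ (-θ₂) hg₂b.1 hg₂b.2 hg₁b.1 hg₁b.2
      rw [abs_neg] at h7
      have h8 : |(-(g₁*θ₂) + g₂*θ₁)| = |g₂*θ₁ + g₁*(-θ₂)| := by
        congr 1
        ring
      rw [h8]
      exact h7
    have h6 : |(-(g₁*θ₂) + g₂*θ₁)|/ρ ≤ 3*(|θ₁|+|θ₂|)/ρ := by gcongr
    linarith
  set j : ℤ := ⌊α⌋ with hj
  set k : ℤ := ⌊β⌋ with hk
  have hfr1 : 0 ≤ α - j ∧ α - j < 1 := by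
    rw [hj]
    exact ⟨by linarith [Int.floor_le α], by linarith [Int.lt_floor_add_one α]⟩
  have hfr2 : 0 ≤ β - k ∧ β - k < 1 := by
    rw [hk]
    exact ⟨by linarith [Int.floor_le β], by linarith [Int.lt_floor_add_one β]⟩
  have hjb : |(j:ℝ)| ≤ A₀ := by
    rw [hj]
    linarith [abs_floor_le α, hαb]
  have hkb : |(k:ℝ)| ≤ A₀ := by
    rw [hk]
    linarith [abs_floor_le β, hβb]
  clear_value α β j k
  set e₁ : ℝ := (α - j)*θ₁ - (β - k)*θ₂ with he₁
  set e₂ : ℝ := (α - j)*θ₂ + (β - k)*θ₁ with he₂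
  have habs_small : ∀ x y : ℝ, 0 ≤ x → x < 1 → |y| ≤ δ → |x*y| ≤ δ := by
    intro x y hx hx1 hyd
    rw [abs_mul, abs_of_nonneg hx]
    calc x * |y| ≤ 1 * δ := mul_le_mul hx1.le hyd (abs_nonneg y) one_pos.le
      _ = δ := one_mul _
  have he₁b : |e₁| ≤ 2*δ := by
    rw [he₁]
    calc |(α - j)*θ₁ - (β - k)*θ₂| ≤ |(α - j)*θ₁| + |(β - k)*θ₂| := abs_sub _ _
      _ ≤ δ + δ := add_le_add (habs_small _ _ hfr1.1 hfr1.2 hE1) (habs_small _ _ hfr2.1 hfr2.2 hE2)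
      _ = 2*δ := by ring
  have he₂b : |e₂| ≤ 2*δ := by
    rw [he₂]
    calc |(α - j)*θ₂ + (β - k)*θ₁| ≤ |(α - j)*θ₂| + |(β - k)*θ₁| := abs_add_le _ _
      _ ≤ δ + δ := add_le_add (habs_small _ _ hfr1.1 hfr1.2 hE2) (habs_small _ _ hfr2.1 hfr2.2 hE1)
      _ = 2*δ := by ring
  clear_value e₁ e₂
  refine ⟨u₀ + j*m, v₀ + k*m, ?_, ?_, ?_, ?_⟩
  · have key : ((|u₀ + j*m - u₀| : ℤ):ℝ) ≤ (((⌈A₀ * |(m:ℝ)|⌉₊ + 1 : ℕ):ℤ):ℝ) := by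
      rw [Int.cast_abs]
      push_cast
      have heq : (u₀:ℝ) + (j:ℝ)*(m:ℝ) - u₀ = (j:ℝ)*(m:ℝ) := by ring
      rw [heq, abs_mul]
      have h2 : |(j:ℝ)| * |(m:ℝ)| ≤ A₀ * |(m:ℝ)| :=
        mul_le_mul_of_nonneg_right hjb (abs_nonneg _)
      have h3 : A₀*|(m:ℝ)| ≤ (⌈A₀ * |(m:ℝ)|⌉₊ : ℝ) := Nat.le_ceil _
      linarith
    exact Int.cast_le.mp key
  · have key : ((|v₀ + k*m - v₀| : ℤ):ℝ) ≤ (((⌈A₀ * |(m:ℝ)|⌉₊ + 1 : ℕ):ℤ):ℝ) := by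
      rw [Int.cast_abs]
      push_cast
      have heq : (v₀:ℝ) + (k:ℝ)*(m:ℝ) - v₀ = (k:ℝ)*(m:ℝ) := by ring
      rw [heq, abs_mul]
      have h2 : |(k:ℝ)| * |(m:ℝ)| ≤ A₀ * |(m:ℝ)| :=
        mul_le_mul_of_nonneg_right hkb (abs_nonneg _)
      have h3 : A₀*|(m:ℝ)| ≤ (⌈A₀ * |(m:ℝ)|⌉₊ : ℝ) := Nat.le_ceil _
      linarith
    exact Int.cast_le.mp key
  · have hval : ((2*(u₀ + j*m)+1 : ℤ):ℝ) * c - ((2*(v₀ + k*m)+1 : ℤ):ℝ) * s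
        = ((Ff + 1 - j*K₁ + k*K₂ : ℤ):ℝ) + (t₁/2 - e₁) := by
      push_cast
      have expand : (2*((u₀:ℝ) + (j:ℝ)*(m:ℝ))+1) * c - (2*((v₀:ℝ) + (k:ℝ)*(m:ℝ))+1) * s
          = f₀ + (j:ℝ)*(θ₁ - K₁) - (k:ℝ)*(θ₂ - K₂) := by
        rw [hf₀, hθ₁, hθ₂]; ring
      rw [expand]
      have hsub : (j:ℝ)*θ₁ - (k:ℝ)*θ₂ = g₁ - e₁ := by
        rw [he₁]
        linear_combination hidα
      have hg1' : g₁ = t₁/2 + 1 - If := hg₁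
      have hIf' : If = f₀ - (Ff:ℝ) := hfract_f
      linarith [hsub]
    rw [hval]
    have hfr : Int.fract (((Ff + 1 - j*K₁ + k*K₂ : ℤ):ℝ) + (t₁/2 - e₁)) = t₁/2 - e₁ := by
      rw [Int.fract_intCast_add]
      apply Int.fract_eq_self.mpr
      have := abs_le.mp he₁b
      constructor <;> [linarith; linarith]
    rw [hfr]
    have := abs_le.mp he₁b
    linarith
  · have hval : ((2*(u₀ + j*m)+1 : ℤ):ℝ) * s + ((2*(v₀ + k*m)+1 : ℤ):ℝ) * c
        = ((Fg + 1 - j*K₂ - k*K₁ : ℤ):ℝ) + (t₂/2 - e₂) := by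
      push_cast
      have expand : (2*((u₀:ℝ) + (j:ℝ)*(m:ℝ))+1) * s + (2*((v₀:ℝ) + (k:ℝ)*(m:ℝ))+1) * c
          = g₀ + (j:ℝ)*(θ₂ - K₂) + (k:ℝ)*(θ₁ - K₁) := by
        rw [hg₀, hθ₁, hθ₂]; ring
      rw [expand]
      have hsub : (j:ℝ)*θ₂ + (k:ℝ)*θ₁ = g₂ - e₂ := by
        rw [he₂]
        linear_combination hidβ
      have hg2' : g₂ = t₂/2 + 1 - Ig := hg₂
      have hIg' : Ig = g₀ - (Fg:ℝ) := hfract_g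
      linarith [hsub]
    rw [hval]
    have hfr : Int.fract (((Fg + 1 - j*K₂ - k*K₁ : ℤ):ℝ) + (t₂/2 - e₂)) = t₂/2 - e₂ := by
      rw [Int.fract_intCast_add]
      apply Int.fract_eq_self.mpr
      have := abs_le.mp he₂b
      constructor <;> [linarith; linarith]
    rw [hfr]
    have := abs_le.mp he₂b
    linarith

set_option maxHeartbeats 1000000 in
lemma count_lower (φ t₁ t₂ : ℝ) (B : ℕ) (hB : 0 < B)
    (hcell : ∀ u₀ v₀ : ℤ, ∃ u v : ℤ, |u - u₀| ≤ (B:ℤ) ∧ |v - v₀| ≤ (B:ℤ) ∧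
      Int.fract (((2*u+1 : ℤ):ℝ) * Real.cos φ - ((2*v+1 : ℤ):ℝ) * Real.sin φ) < t₁ ∧
      Int.fract (((2*u+1 : ℤ):ℝ) * Real.sin φ + ((2*v+1 : ℤ):ℝ) * Real.cos φ) < t₂) :
    ∀ M : ℕ, 8*(B+1) ≤ M → (M:ℝ)^2/(256*((B:ℝ)+1)^2) ≤ (ScountOdd φ t₁ t₂ M : ℝ) := by
  classical
  choose uf vf hu hv hf hg using hcell
  intro M hM
  set I : ℕ := M / (8*(B+1)) with hI
  have hk : 0 < 8*(B+1) := by positivity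
  have hI1 : 1 ≤ I := by
    rw [hI, Nat.le_div_iff_mul_le hk]
    simpa using hM
  have hIM : 8*(B+1)*I ≤ M := by
    rw [hI, mul_comm]
    exact Nat.div_mul_le_self M _
  have hM16 : M ≤ 16*(B+1)*I := by
    have h1 := Nat.div_add_mod M (8*(B+1))
    have h2 := Nat.mod_lt M hk
    calc M = 8*(B+1) * I + M % (8*(B+1)) := by rw [hI]; omega
      _ ≤ 8*(B+1) * I + 8*(B+1) := by omega
      _ ≤ 8*(B+1) * I + 8*(B+1)*I := by
          have : 8*(B+1) = 8*(B+1)*1 := by ring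
          nlinarith [Nat.mul_le_mul_left (8*(B+1)) hI1]
      _ = 16*(B+1)*I := by ring
  set W : ℤ := 2*(B:ℤ)+1 with hW
  set F : ℤ×ℤ → ℤ×ℤ := fun p => (2*(uf (W*p.1) (W*p.2))+1, 2*(vf (W*p.1) (W*p.2))+1) with hF
  set S : Finset (ℤ×ℤ) := (Finset.Icc (1:ℤ) (I:ℤ)) ×ˢ (Finset.Icc (1:ℤ) (I:ℤ)) with hS
  -- the range bound for constructed points
  have hrange : ∀ i : ℤ, 1 ≤ i → i ≤ (I:ℤ) → ∀ x : ℤ, |x - W*i| ≤ (B:ℤ) →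
      -(M:ℤ) ≤ 2*x+1 ∧ 2*x+1 ≤ (M:ℤ) := by
    intro i hi1 hiI x hx
    have hWpos : (0:ℤ) < W := by rw [hW]; positivity
    have hxb : |x| ≤ W*(I:ℤ) + B := by
      have h1 : |W*i| ≤ W*(I:ℤ) := by
        rw [abs_mul, abs_of_pos hWpos, abs_of_pos (by linarith : (0:ℤ) < i)]
        exact mul_le_mul_of_nonneg_left hiI hWpos.le
      calc |x| = |(x - W*i) + W*i| := by ring_nf
        _ ≤ |x - W*i| + |W*i| := abs_add_le _ _
        _ ≤ (B:ℤ) + W*(I:ℤ) := add_le_add hx h1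
        _ = W*(I:ℤ) + B := by ring
    have hIMZ : 8*((B:ℤ)+1)*(I:ℤ) ≤ (M:ℤ) := by exact_mod_cast hIM
    have hI1Z : 1 ≤ (I:ℤ) := by exact_mod_cast hI1
    have hBZ : (0:ℤ) < (B:ℤ) := by exact_mod_cast hB
    have key : 2*(W*(I:ℤ) + B) + 1 ≤ (M:ℤ) := by
      rw [hW]
      nlinarith [hIMZ, hI1Z, hBZ]
    have := abs_le.mp hxb
    constructor <;> nlinarith [this.1, this.2]
  have hmaps : ∀ p ∈ S, F p ∈ ((Finset.Icc (-(M : ℤ), -(M : ℤ)) ((M : ℤ), (M : ℤ))).filter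
      fun x => Odd x.1 ∧ Odd x.2 ∧
        Int.fract ((x.1 : ℝ) * Real.cos φ - (x.2 : ℝ) * Real.sin φ) < t₁ ∧
        Int.fract ((x.1 : ℝ) * Real.sin φ + (x.2 : ℝ) * Real.cos φ) < t₂) := by
    intro p hp
    rw [hS, Finset.mem_product, Finset.mem_Icc, Finset.mem_Icc] at hp
    rw [Finset.mem_filter]
    refine ⟨?_, by simp only [hF]; exact odd_two_mul_add_one _, by simp only [hF]; exact odd_two_mul_add_one _, ?_, ?_⟩
    · rw [Finset.mem_Icc]
      have r1 := hrange p.1 hp.1.1 hp.1.2 _ (hu (W*p.1) (W*p.2))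
      have r2 := hrange p.2 hp.2.1 hp.2.2 _ (hv (W*p.1) (W*p.2))
      constructor <;> rw [Prod.mk_le_mk] <;> constructor
      · exact r1.1
      · exact r2.1
      · exact r1.2
      · exact r2.2
    · exact hf (W*p.1) (W*p.2)
    · exact hg (W*p.1) (W*p.2)
  have hinj : Set.InjOn F S := by
    intro p hp q hq hpq
    rw [hS, Finset.coe_product] at hp hq
    have hWpos : (0:ℤ) < W := by rw [hW]; positivity
    have ueq : uf (W*p.1) (W*p.2) = uf (W*q.1) (W*q.2) := by
      have := congrArg Prod.fst hpq
      simp only [hF] at this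
      omega
    have veq : vf (W*p.1) (W*p.2) = vf (W*q.1) (W*q.2) := by
      have := congrArg Prod.snd hpq
      simp only [hF] at this
      omega
    have hcoord : ∀ a b : ℤ, ∀ x : ℤ, |x - W*a| ≤ (B:ℤ) → |x - W*b| ≤ (B:ℤ) → a = b := by
      intro a b x h1 h2
      by_contra hne
      have hd : 1 ≤ |a - b| := Int.one_le_abs (sub_ne_zero.mpr hne)
      have : |W*(a-b)| ≤ 2*B := by
        calc |W*(a-b)| = |(x - W*b) - (x - W*a)| := by ring_nf
          _ ≤ |x - W*b| + |x - W*a| := abs_sub _ _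
          _ ≤ 2*B := by omega
      rw [abs_mul, abs_of_pos hWpos] at this
      nlinarith [hd]
    have e1 : p.1 = q.1 := by
      apply hcoord p.1 q.1 (uf (W*p.1) (W*p.2)) (hu (W*p.1) (W*p.2))
      rw [ueq]
      exact hu (W*q.1) (W*q.2)
    have e2 : p.2 = q.2 := by
      apply hcoord p.2 q.2 (vf (W*p.1) (W*p.2)) (hv (W*p.1) (W*p.2))
      rw [veq]
      exact hv (W*q.1) (W*q.2)
    exact Prod.ext e1 e2
  have hcard : S.card ≤ ScountOdd φ t₁ t₂ M := by
    rw [ScountOdd]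
    exact Finset.card_le_card_of_injOn F hmaps hinj
  have hScard : S.card = I*I := by
    rw [hS, Finset.card_product, Int.card_Icc]
    have : ((I:ℤ) + 1 - 1).toNat = I := by omega
    rw [this]
  -- wrap up over ℝ
  have hcardR : ((I:ℝ)*(I:ℝ)) ≤ (ScountOdd φ t₁ t₂ M : ℝ) := by
    rw [hScard] at hcard
    exact_mod_cast hcard
  have hMR : (M:ℝ) ≤ 16*((B:ℝ)+1)*(I:ℝ) := by exact_mod_cast hM16
  rw [div_le_iff₀ (by positivity)]
  nlinarith [hMR, hcardR, sq_nonneg ((I:ℝ)), Nat.cast_nonneg (α := ℝ) M, Nat.cast_nonneg (α := ℝ) I, Nat.cast_nonneg (α := ℝ) B]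

lemma count_upper (φ t₁ t₂ : ℝ) (M : ℕ) (hM : 1 ≤ M) :
    (ScountOdd φ t₁ t₂ M : ℝ) ≤ 9*(M:ℝ)^2 := by
  classical
  have h1 : ScountOdd φ t₁ t₂ M ≤ (2*M+1)*(2*M+1) := by
    rw [ScountOdd]
    calc _ ≤ (Finset.Icc (-(M : ℤ), -(M : ℤ)) ((M : ℤ), (M : ℤ))).card := Finset.card_filter_le _ _
      _ = (2*M+1)*(2*M+1) := by
          rw [Finset.card_Icc_prod]
          simp only [Int.card_Icc]
          have : ((M:ℤ) + 1 - -(M:ℤ)).toNat = 2*M+1 := by omega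
          rw [this]
  have h2 : ((2*M+1)*(2*M+1) : ℝ) ≤ 9*(M:ℝ)^2 := by
    have hMR : (1:ℝ) ≤ (M:ℝ) := by exact_mod_cast hM
    nlinarith
  calc (ScountOdd φ t₁ t₂ M : ℝ) ≤ ((2*M+1)*(2*M+1) : ℕ) := by exact_mod_cast h1
    _ = ((2*M+1)*(2*M+1) : ℝ) := by push_cast; ring
    _ ≤ 9*(M:ℝ)^2 := h2

set_option maxHeartbeats 1000000 in
theorem main_lemma_odd_generic (φ t₁ t₂ : ℝ) (ht₁ : 0 < t₁) (ht₁' : t₁ ≤ 1)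
    (ht₂ : 0 < t₂) (ht₂' : t₂ ≤ 1)
    (hφ : ∀ k : ℤ, φ ≠ (k : ℝ) * (Real.pi / 2)) (hexc : ¬ Exceptional φ) :
    ∃ c₁ c₂ : ℝ, 0 < c₁ ∧ 0 < c₂ ∧ ∃ M₀ : ℕ, 0 < M₀ ∧
      ∀ M : ℕ, M₀ ≤ M → c₁ * (M : ℝ) ^ 2 ≤ (ScountOdd φ t₁ t₂ M : ℝ) ∧
        (ScountOdd φ t₁ t₂ M : ℝ) ≤ c₂ * (M : ℝ) ^ 2 := by
  obtain ⟨B, hB, hcell⟩ :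
      ∃ B : ℕ, 0 < B ∧ ∀ u₀ v₀ : ℤ, ∃ u v : ℤ, |u - u₀| ≤ (B:ℤ) ∧ |v - v₀| ≤ (B:ℤ) ∧
        Int.fract (((2*u+1 : ℤ):ℝ) * Real.cos φ - ((2*v+1 : ℤ):ℝ) * Real.sin φ) < t₁ ∧
        Int.fract (((2*u+1 : ℤ):ℝ) * Real.sin φ + ((2*v+1 : ℤ):ℝ) * Real.cos φ) < t₂ := by
    by_cases hrat : (∃ q : ℚ, (q:ℝ) = Real.cos φ) ∧ (∃ q : ℚ, (q:ℝ) = Real.sin φ)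
    · -- rational case
      obtain ⟨⟨qc, hqc⟩, ⟨qs, hqs⟩⟩ := hrat
      set g₀ : ℤ := qc.num * qs.den with hg₀
      set h₀ : ℤ := qs.num * qc.den with hh₀
      set r₀ : ℤ := (qc.den : ℤ) * qs.den with hr₀def
      have hdc : ((qc.den : ℤ):ℝ) ≠ 0 := by
        simp [qc.den_nz]
      have hds : ((qs.den : ℤ):ℝ) ≠ 0 := by
        simp [qs.den_nz]
      have hr₀ : r₀ ≠ 0 := by
        rw [hr₀def]
        have := qc.den_nz
        have := qs.den_nz
        positivity
      have hr₀R : (r₀:ℝ) ≠ 0 := Int.cast_ne_zero.mpr hr₀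
      have hcval : Real.cos φ = (g₀:ℝ)/(r₀:ℝ) := by
        rw [← hqc, Rat.cast_def, hg₀, hr₀def]
        push_cast
        field_simp
      have hsval : Real.sin φ = (h₀:ℝ)/(r₀:ℝ) := by
        rw [← hqs, Rat.cast_def, hh₀, hr₀def]
        push_cast
        field_simp
      have hpyR : (g₀:ℝ)^2 + (h₀:ℝ)^2 = (r₀:ℝ)^2 := by
        have hpy1 := Real.sin_sq_add_cos_sq φ
        rw [hcval, hsval] at hpy1
        field_simp at hpy1
        linarith
      have hpy₀ : g₀^2 + h₀^2 = r₀^2 := by exact_mod_cast hpyR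
      obtain ⟨g, h, r, hr, hpy, hgr, hhr, hne⟩ :=
        reduce_pyth r₀.natAbs g₀ h₀ r₀ le_rfl hr₀ hpy₀
      obtain ⟨hoddG, hoddH⟩ := odd_legs g h r hpy hne
      exact cellA (Real.cos φ) (Real.sin φ) t₁ t₂ ht₁ ht₂ g h r hr hpy
        (by rw [hcval, hgr]) (by rw [hsval, hhr]) hoddG hoddH
    · exact cellB (Real.cos φ) (Real.sin φ) t₁ t₂ ht₁ ht₁' ht₂ ht₂' hrat
  refine ⟨(256*((B:ℝ)+1)^2)⁻¹, 9, by positivity, by norm_num, 8*(B+1), by positivity, ?_⟩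
  intro M hM
  constructor
  · have := count_lower φ t₁ t₂ B hB hcell M hM
    calc (256*((B:ℝ)+1)^2)⁻¹ * (M:ℝ)^2 = (M:ℝ)^2/(256*((B:ℝ)+1)^2) := by ring
      _ ≤ (ScountOdd φ t₁ t₂ M : ℝ) := this
  · exact count_upper φ t₁ t₂ M (by omega)
end

section
/- Let φ ∈ ℝ and let (a₁,b₁), (a₂,b₂) ∈ ℤ² be distinct lattice points with r_φ(a₁,b₁) = r_φ(a₂,b₂). Then (a₁ − a₂)² + (b₁ − b₂)² = 1; in particular, either a₁ = a₂ and b₁ − b₂ = ±1, or b₁ = b₂ and a₁ − a₂ = ±1. -/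
lemma Int.eq_unit_of_sq_add_sq_lt_two {u v : ℤ} (h0 : u ≠ 0 ∨ v ≠ 0) (h : u ^ 2 + v ^ 2 < 2) :
    u ^ 2 + v ^ 2 = 1 ∧ ((u = 0 ∧ (v = 1 ∨ v = -1)) ∨ (v = 0 ∧ (u = 1 ∨ u = -1))) := by
  have hu₁ : -1 ≤ u := by nlinarith
  have hu₂ : u ≤ 1 := by nlinarith
  have hv₁ : -1 ≤ v := by nlinarith
  have hv₂ : v ≤ 1 := by nlinarith
  interval_cases u <;> interval_cases v <;> simp_all

lemma rotate_sq_add_sq (x y φ : ℝ) :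
    (x * Real.cos φ - y * Real.sin φ) ^ 2 + (x * Real.sin φ + y * Real.cos φ) ^ 2
      = x ^ 2 + y ^ 2 := by
  linear_combination (x ^ 2 + y ^ 2) * Real.cos_sq_add_sin_sq φ

lemma sq_add_sq_sub_lt_two_of_rphi_eq {φ : ℝ} {p q : ℤ × ℤ} (h : rphi φ p = rphi φ q) :
    (p.1 - q.1) ^ 2 + (p.2 - q.2) ^ 2 < 2 := by
  simp only [rphi, Prod.mk.injEq] at h
  have hx : ((p.1 - q.1 : ℝ) * Real.cos φ - (p.2 - q.2 : ℝ) * Real.sin φ) ^ 2 < 1 := by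
    rw [sq_lt_one_iff_abs_lt_one]
    convert Int.abs_sub_lt_one_of_floor_eq_floor h.1 using 2
    ring
  have hy : ((p.1 - q.1 : ℝ) * Real.sin φ + (p.2 - q.2 : ℝ) * Real.cos φ) ^ 2 < 1 := by
    rw [sq_lt_one_iff_abs_lt_one]
    convert Int.abs_sub_lt_one_of_floor_eq_floor h.2 using 2
    ring
  have hlt : (p.1 - q.1 : ℝ) ^ 2 + (p.2 - q.2 : ℝ) ^ 2 < 2 := by
    rw [← rotate_sq_add_sq _ _ φ]
    linarith
  exact_mod_cast hlt

theorem same_image_neighbours (φ : ℝ) (a₁ b₁ a₂ b₂ : ℤ)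
    (hne : (a₁, b₁) ≠ (a₂, b₂)) (h : rphi φ (a₁, b₁) = rphi φ (a₂, b₂)) :
    (a₁ - a₂) ^ 2 + (b₁ - b₂) ^ 2 = 1 ∧
      ((a₁ = a₂ ∧ (b₁ - b₂ = 1 ∨ b₁ - b₂ = -1)) ∨
        (b₁ = b₂ ∧ (a₁ - a₂ = 1 ∨ a₁ - a₂ = -1))) := by
  have hdiff : a₁ - a₂ ≠ 0 ∨ b₁ - b₂ ≠ 0 := by
    rw [Ne, Prod.mk.injEq, not_and_or] at hne
    simpa only [Ne, sub_eq_zero] using hne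
  simpa only [sub_eq_zero] using
    Int.eq_unit_of_sq_add_sq_lt_two hdiff (sq_add_sq_sub_lt_two_of_rphi_eq h)
end

section
/- Let φ ∈ ℝ with 0 < φ < π/2 and let a, b, n, m ∈ ℤ. Then the four conditions A_φ(a,b) ∈ T_(n,m−1), A_φ(a,b+1) ∈ T_(n−1,m), A_φ(a+1,b) ∈ T_(n+1,m), A_φ(a+1,b+1) ∈ T_(n,m+1) hold simultaneously if and only if 1 − cos φ ≤ a·cos φ − b·sin φ − n < sin φ and 1 − sin φ − cos φ ≤ a·sin φ + b·cos φ − m < 0. -/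
/-- The rotation of the plane by angle `φ`. -/
noncomputable def Aphi (φ : ℝ) (p : ℝ × ℝ) : ℝ × ℝ :=
  (p.1 * Real.cos φ - p.2 * Real.sin φ, p.1 * Real.sin φ + p.2 * Real.cos φ)

/-- The half-open unit square `[x, x+1) × [y, y+1)`. -/
def Tsq (x y : ℝ) : Set (ℝ × ℝ) :=
  Set.Ico x (x + 1) ×ˢ Set.Ico y (y + 1)

theorem neighbour_squares_iff (φ : ℝ) (hφ₁ : 0 < φ) (hφ₂ : φ < Real.pi / 2)
    (a b n m : ℤ) :
    (Aphi φ ((a : ℝ), (b : ℝ)) ∈ Tsq (n : ℝ) ((m : ℝ) - 1) ∧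
        Aphi φ ((a : ℝ), (b : ℝ) + 1) ∈ Tsq ((n : ℝ) - 1) (m : ℝ) ∧
        Aphi φ ((a : ℝ) + 1, (b : ℝ)) ∈ Tsq ((n : ℝ) + 1) (m : ℝ) ∧
        Aphi φ ((a : ℝ) + 1, (b : ℝ) + 1) ∈ Tsq (n : ℝ) ((m : ℝ) + 1)) ↔
      (1 - Real.cos φ ≤ (a : ℝ) * Real.cos φ - (b : ℝ) * Real.sin φ - (n : ℝ) ∧
          (a : ℝ) * Real.cos φ - (b : ℝ) * Real.sin φ - (n : ℝ) < Real.sin φ) ∧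
        (1 - Real.sin φ - Real.cos φ ≤
            (a : ℝ) * Real.sin φ + (b : ℝ) * Real.cos φ - (m : ℝ) ∧
          (a : ℝ) * Real.sin φ + (b : ℝ) * Real.cos φ - (m : ℝ) < 0) := by
  have pyth := Real.sin_sq_add_cos_sq φ
  have hs : 0 < Real.sin φ := Real.sin_pos_of_pos_of_lt_pi hφ₁ (by linarith [Real.pi_pos])
  have hc : 0 < Real.cos φ := Real.cos_pos_of_mem_Ioo ⟨by linarith [Real.pi_pos], hφ₂⟩
  have hs1 : Real.sin φ < 1 := by nlinarith
  have hc1 : Real.cos φ < 1 := by nlinarith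
  have hsc : 1 < Real.sin φ + Real.cos φ := by nlinarith
  simp only [Aphi, Tsq, Set.mem_prod, Set.mem_Ico]
  constructor
  · rintro ⟨⟨⟨h1, h2⟩, h3, h4⟩, ⟨⟨h5, h6⟩, h7, h8⟩, ⟨⟨h9, h10⟩, h11, h12⟩,
      ⟨⟨h13, h14⟩, h15, h16⟩⟩
    exact ⟨⟨by linarith, by linarith⟩, by linarith, by linarith⟩
  · rintro ⟨⟨h1, h2⟩, h3, h4⟩
    refine ⟨⟨⟨by linarith, by linarith⟩, by linarith, by linarith⟩,
      ⟨⟨by linarith, by linarith⟩, by linarith, by linarith⟩,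
      ⟨⟨by linarith, by linarith⟩, by linarith, by linarith⟩,
      ⟨⟨by linarith, by linarith⟩, by linarith, by linarith⟩⟩
end

section
/- Let a ∈ ℤ satisfy 1 − 1/√2 ≤ {a/√2} ≤ √2 − 1, and set ω = ⌊a/√2⌋ (these hypotheses imply ⌊√2·ω⌋ = a − 1). Then the eighth iterate of the discretized rotation by angle π/4 fixes (a,0): r_{π/4}⁸(a,0) = (a,0). -/
set_option maxHeartbeats 1000000


theorem period_eight (a : ℤ)
    (h₁ : 1 - 1 / Real.sqrt 2 ≤ Int.fract ((a : ℝ) / Real.sqrt 2))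
    (h₂ : Int.fract ((a : ℝ) / Real.sqrt 2) ≤ Real.sqrt 2 - 1) :
    (rphi (Real.pi / 4))^[8] (a, 0) = (a, 0) := by
  set s : ℝ := Real.sqrt 2 with hs
  have hs0 : 0 < s := Real.sqrt_pos.mpr (by norm_num)
  have hs2 : s * s = 2 := Real.mul_self_sqrt (by norm_num)
  have hs14 : 1.4 < s := by nlinarith
  have hs15 : s < 1.5 := by nlinarith
  set ω : ℤ := ⌊(a : ℝ) / s⌋ with hω
  set f : ℝ := Int.fract ((a : ℝ) / s) with hf
  have hf0 : 0 ≤ f := Int.fract_nonneg _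
  have hf1 : f < 1 := Int.fract_lt_one _
  have hx : (ω : ℝ) + f = (a : ℝ) / s := Int.floor_add_fract _
  have ha : (a : ℝ) = s * ω + s * f := by
    have h2 : s * ((ω : ℝ) + f) = a := by rw [hx]; field_simp
    nlinarith [h2]
  have hA : s - 1 ≤ s * f := by
    have h := mul_le_mul_of_nonneg_left h₁ hs0.le
    have hinv : s * (1 / s) = 1 := by field_simp
    nlinarith [h, hinv]
  have hB : s * f ≤ 2 - s := by
    have h := mul_le_mul_of_nonneg_left h₂ hs0.le
    nlinarith [h]
  have hfA : 2 - s ≤ 2 * f := by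
    nlinarith [mul_le_mul_of_nonneg_left hA hs0.le, hs2, hf0]
  have hfB : 2 * f ≤ 2 * s - 2 := by
    nlinarith [mul_le_mul_of_nonneg_left hB hs0.le, hs2, hf0]
  have haS : (a : ℝ) * s = 2 * ω + 2 * f := by
    have h2 : (a : ℝ) * s = s * s * ω + s * s * f := by rw [ha]; ring
    rw [hs2] at h2; linarith
  have hcos : Real.cos (Real.pi / 4) = s / 2 := by
    rw [Real.cos_pi_div_four]
  have hsin : Real.sin (Real.pi / 4) = s / 2 := by
    rw [Real.sin_pi_div_four]
  have key : ∀ (x : ℝ) (n : ℤ), (n : ℝ) ≤ x → x < (n : ℝ) + 1 → ⌊x⌋ = n := by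
    intro x n k1 k2
    exact Int.floor_eq_iff.mpr ⟨k1, by exact_mod_cast k2⟩
  have e1 : rphi (Real.pi / 4) (a, 0) = (ω, ω) := by
    simp only [rphi, hcos, hsin, Prod.mk.injEq]
    constructor <;>
      · apply key
        · push_cast; linarith [haS]
        · push_cast; linarith [haS]
  have e2 : rphi (Real.pi / 4) (ω, ω) = (0, a - 1) := by
    simp only [rphi, hcos, hsin, Prod.mk.injEq]
    constructor <;>
      · apply key
        · push_cast; linarith [ha, hA, hB]
        · push_cast; linarith [ha, hA, hB]
  have e3 : rphi (Real.pi / 4) (0, a - 1) = (-ω, ω - 1) := by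
    simp only [rphi, hcos, hsin, Prod.mk.injEq]
    constructor <;>
      · apply key
        · push_cast; linarith [haS, hfA, hfB]
        · push_cast; linarith [haS, hfA, hfB]
  have e4 : rphi (Real.pi / 4) (-ω, ω - 1) = (1 - a, -1) := by
    simp only [rphi, hcos, hsin, Prod.mk.injEq]
    constructor <;>
      · apply key
        · push_cast; linarith [ha, hA, hB]
        · push_cast; linarith [ha, hA, hB]
  have e5 : rphi (Real.pi / 4) (1 - a, -1) = (1 - ω, -ω - 1) := by
    simp only [rphi, hcos, hsin, Prod.mk.injEq]
    constructor <;>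
      · apply key
        · push_cast; linarith [haS, hfA, hfB]
        · push_cast; linarith [haS, hfA, hfB]
  have e6 : rphi (Real.pi / 4) (1 - ω, -ω - 1) = (1, -a) := by
    simp only [rphi, hcos, hsin, Prod.mk.injEq]
    constructor <;>
      · apply key
        · push_cast; linarith [ha, hA, hB]
        · push_cast; linarith [ha, hA, hB]
  have e7 : rphi (Real.pi / 4) (1, -a) = (ω + 1, -ω) := by
    simp only [rphi, hcos, hsin, Prod.mk.injEq]
    constructor <;>
      · apply key
        · push_cast; linarith [haS, hfA, hfB]
        · push_cast; linarith [haS, hfA, hfB]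
  have e8 : rphi (Real.pi / 4) (ω + 1, -ω) = (a, 0) := by
    simp only [rphi, hcos, hsin, Prod.mk.injEq]
    constructor <;>
      · apply key
        · push_cast; linarith [ha, hA, hB]
        · push_cast; linarith [ha, hA, hB]
  simp only [show (8 : ℕ) = 1+1+1+1+1+1+1+1 from rfl, Function.iterate_add_apply,
    Function.iterate_one, e1, e2, e3, e4, e5, e6, e7, e8]
end

section
/- There exist infinitely many integers a such that 1 − 1/√2 ≤ {a/√2} ≤ √2 − 1; moreover, every such a also satisfies ⌊√2·⌊a/√2⌋⌋ = a − 1. -/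
/-- Pell-type recursion producing pairs (m,n) with m(m+1) = 2n². -/
def pellMN : ℕ → ℤ × ℤ
  | 0 => (1, 1)
  | k + 1 => (3 * (pellMN k).1 + 4 * (pellMN k).2 + 1,
              2 * (pellMN k).1 + 3 * (pellMN k).2 + 1)

lemma pellMN_inv (k : ℕ) :
    (pellMN k).1 * ((pellMN k).1 + 1) = 2 * (pellMN k).2 ^ 2 ∧
      1 ≤ (pellMN k).1 ∧ 1 ≤ (pellMN k).2 := by
  induction k with
  | zero => norm_num [pellMN]
  | succ k ih =>
    obtain ⟨h, hm, hn⟩ := ih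
    refine ⟨?_, by simp only [pellMN]; linarith, by simp only [pellMN]; linarith⟩
    simp only [pellMN]
    nlinarith [h]

lemma pellMN_mono (k : ℕ) : (pellMN k).1 < (pellMN (k + 1)).1 := by
  obtain ⟨_, hm, hn⟩ := pellMN_inv k
  show (pellMN k).1 < 3 * (pellMN k).1 + 4 * (pellMN k).2 + 1
  linarith

/-- Key arithmetic fact: 4n ≤ 3m + 1. -/
lemma pell_key {m n : ℤ} (h : m * (m + 1) = 2 * n ^ 2) (hm : 1 ≤ m) (hn : 1 ≤ n) :
    4 * n ≤ 3 * m + 1 := by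
  nlinarith [sq_nonneg (m - 1), sq_nonneg (3 * m + 1 - 4 * n), sq_nonneg (3 * m + 1 + 4 * n)]

/-- Membership of m+1 in the good set. -/
lemma good_mem {m n : ℤ} (h : m * (m + 1) = 2 * n ^ 2) (hm : 1 ≤ m) (hn : 1 ≤ n) :
    1 - 1 / Real.sqrt 2 ≤ Int.fract (((m + 1 : ℤ) : ℝ) / Real.sqrt 2) ∧
      Int.fract (((m + 1 : ℤ) : ℝ) / Real.sqrt 2) ≤ Real.sqrt 2 - 1 := by
  set r := Real.sqrt 2 with hrdef
  have hr2 : r ^ 2 = 2 := Real.sq_sqrt (by norm_num)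
  have hr1 : 1 < r := by nlinarith [Real.sqrt_nonneg 2]
  have hrpos : 0 < r := by linarith
  have hrlt2 : r < 2 := by nlinarith
  have hkey : (4 : ℝ) * n ≤ 3 * m + 1 := by exact_mod_cast pell_key h hm hn
  have hmr : (1 : ℝ) ≤ m := by exact_mod_cast hm
  have hnr : (1 : ℝ) ≤ n := by exact_mod_cast hn
  have hR : (m : ℝ) * (m + 1) = 2 * n ^ 2 := by exact_mod_cast h
  -- lower bound: (n+1) r ≤ m + 2
  have hlow : ((n : ℝ) + 1) * r ≤ (m : ℝ) + 2 := by
    nlinarith [sq_nonneg ((m : ℝ) + 2 - ((n : ℝ) + 1) * r), mul_pos hrpos hrpos]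
  -- upper bound: m - 1 ≤ (n - 1) r
  have hup : (m : ℝ) - 1 ≤ ((n : ℝ) - 1) * r := by
    have hsq : ((m : ℝ) - 1) ^ 2 ≤ (((n : ℝ) - 1) * r) ^ 2 := by
      have he : (((n : ℝ) - 1) * r) ^ 2 = 2 * ((n : ℝ) - 1) ^ 2 := by
        rw [mul_pow, hr2]; ring
      rw [he]; nlinarith [hR, hkey]
    have hb : 0 ≤ ((n : ℝ) - 1) * r := mul_nonneg (by linarith) hrpos.le
    nlinarith [hsq, hb]
  -- multiplied-by-r versions
  have hlow2 : 2 * ((n : ℝ) + 1) ≤ ((m : ℝ) + 2) * r := by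
    have h1 := mul_le_mul_of_nonneg_right hlow hrpos.le
    calc 2 * ((n : ℝ) + 1) = ((n : ℝ) + 1) * r * r := by
          rw [mul_assoc, ← sq, hr2]; ring
    _ ≤ ((m : ℝ) + 2) * r := h1
  have hup2 : ((m : ℝ) - 1) * r ≤ 2 * ((n : ℝ) - 1) := by
    have h1 := mul_le_mul_of_nonneg_right hup hrpos.le
    calc ((m : ℝ) - 1) * r ≤ ((n : ℝ) - 1) * r * r := h1
    _ = 2 * ((n : ℝ) - 1) := by rw [mul_assoc, ← sq, hr2]; ring
  -- rewrite divisions by r as multiplications over 2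
  have hd1 : (1 : ℝ) / r = r / 2 := by
    rw [div_eq_div_iff hrpos.ne' two_ne_zero]; linear_combination (-1 : ℝ) * hr2
  have hd2 : ((m : ℝ) + 1) / r = ((m : ℝ) + 1) * r / 2 := by
    rw [div_eq_div_iff hrpos.ne' two_ne_zero]; linear_combination (-1 : ℝ) * ((m : ℝ) + 1) * hr2
  have hfv : Int.fract (((m + 1 : ℤ) : ℝ) / r) = ((m : ℝ) + 1) / r - n := by
    rw [Int.fract_eq_iff]
    refine ⟨?_, ?_, n, by push_cast; ring⟩
    · push_cast
      rw [hd2]; linarith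
    · push_cast
      rw [hd2]; linarith
  have hcast : (((m + 1 : ℤ) : ℝ)) = (m : ℝ) + 1 := by push_cast; ring
  rw [hcast] at hfv ⊢
  rw [hfv, hd1, hd2]
  constructor <;> linarith

theorem infinitely_many_good_starting_points :
    {a : ℤ | 1 - 1 / Real.sqrt 2 ≤ Int.fract ((a : ℝ) / Real.sqrt 2) ∧
        Int.fract ((a : ℝ) / Real.sqrt 2) ≤ Real.sqrt 2 - 1}.Infinite ∧
      ∀ a : ℤ, 1 - 1 / Real.sqrt 2 ≤ Int.fract ((a : ℝ) / Real.sqrt 2) →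
        Int.fract ((a : ℝ) / Real.sqrt 2) ≤ Real.sqrt 2 - 1 →
          ⌊Real.sqrt 2 * (⌊(a : ℝ) / Real.sqrt 2⌋ : ℝ)⌋ = a - 1 := by
  have hr2 : Real.sqrt 2 ^ 2 = 2 := Real.sq_sqrt (by norm_num)
  have hr1 : 1 < Real.sqrt 2 := by nlinarith [Real.sqrt_nonneg 2]
  have hrpos : (0 : ℝ) < Real.sqrt 2 := by linarith
  constructor
  · apply Set.infinite_of_injective_forall_mem
      (f := fun k : ℕ => (pellMN k).1 + 1)
    · have hsm : StrictMono (fun k : ℕ => (pellMN k).1 + 1) := by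
        apply strictMono_nat_of_lt_succ
        intro k
        have := pellMN_mono k
        simp only [add_lt_add_iff_right]
        exact this
      exact hsm.injective
    · intro k
      obtain ⟨h, hm, hn⟩ := pellMN_inv k
      exact good_mem h hm hn
  · intro a h1 h2
    set f := Int.fract ((a : ℝ) / Real.sqrt 2) with hf
    have hfl : (0 : ℝ) < f := by
      have : (0 : ℝ) < 1 - 1 / Real.sqrt 2 := by
        rw [sub_pos, div_lt_one hrpos]; exact hr1
      linarith
    have hfr : Real.sqrt 2 * f ≤ 1 := by
      have : Real.sqrt 2 * f ≤ Real.sqrt 2 * (Real.sqrt 2 - 1) :=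
        mul_le_mul_of_nonneg_left h2 (le_of_lt hrpos)
      nlinarith
    have hfpos : 0 < Real.sqrt 2 * f := mul_pos hrpos hfl
    have hfloor : ((⌊(a : ℝ) / Real.sqrt 2⌋ : ℤ) : ℝ) = (a : ℝ) / Real.sqrt 2 - f := by
      rw [hf, Int.self_sub_fract]
    rw [Int.floor_eq_iff]
    constructor
    · push_cast
      rw [hfloor, mul_sub, mul_div_cancel₀ _ (ne_of_gt hrpos)]
      linarith
    · push_cast
      rw [hfloor, mul_sub, mul_div_cancel₀ _ (ne_of_gt hrpos)]
      linarith
end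

section
/- Let a ∈ ℤ satisfy 1 − 1/√2 ≤ {a/√2} ≤ √2 − 1, and set ω = ⌊a/√2⌋. Then 1 − 1/√2 ≤ {√2·ω} ≤ 1/√2. -/
theorem fract_sqrt_two_omega (a : ℤ)
    (h₁ : 1 - 1 / Real.sqrt 2 ≤ Int.fract ((a : ℝ) / Real.sqrt 2))
    (h₂ : Int.fract ((a : ℝ) / Real.sqrt 2) ≤ Real.sqrt 2 - 1) :
    1 - 1 / Real.sqrt 2 ≤ Int.fract (Real.sqrt 2 * (⌊(a : ℝ) / Real.sqrt 2⌋ : ℝ)) ∧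
      Int.fract (Real.sqrt 2 * (⌊(a : ℝ) / Real.sqrt 2⌋ : ℝ)) ≤ 1 / Real.sqrt 2 := by
  set s := Real.sqrt 2 with hsdef
  have hs2 : s ^ 2 = 2 := Real.sq_sqrt (by norm_num)
  have hs0 : 0 < s := Real.sqrt_pos.mpr (by norm_num)
  have hs1 : 1 < s := by nlinarith
  have hs15 : s < 1.5 := by nlinarith
  set f := Int.fract ((a : ℝ) / s) with hfdef
  have hkey : s * (⌊(a : ℝ) / s⌋ : ℝ) = a - s * f := by
    have : (⌊(a : ℝ) / s⌋ : ℝ) = (a : ℝ) / s - f := by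
      rw [hfdef, Int.fract]; ring
    rw [this]
    field_simp
  have hfl : s - 1 ≤ s * f := by
    have := mul_le_mul_of_nonneg_left h₁ hs0.le
    have h1s : s * (1 - 1 / s) = s - 1 := by field_simp
    linarith [h1s ▸ this]
  have hfu : s * f ≤ 2 - s := by
    have := mul_le_mul_of_nonneg_left h₂ hs0.le
    nlinarith
  have hfloor : ⌊s * (⌊(a : ℝ) / s⌋ : ℝ)⌋ = a - 1 := by
    rw [Int.floor_eq_iff]
    constructor
    · push_cast; rw [hkey]; nlinarith
    · push_cast; rw [hkey]; nlinarith
  have hfr : Int.fract (s * (⌊(a : ℝ) / s⌋ : ℝ)) = 1 - s * f := by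
    rw [Int.fract, hfloor, hkey]; push_cast; ring
  rw [hfr]
  constructor
  · have : 1 / s = s / 2 := by field_simp; nlinarith
    rw [this]; nlinarith
  · rw [le_div_iff₀ hs0]
    nlinarith
end

section
/- Let u, v ∈ ℤ with gcd(u,v) = 1 and u ≢ v (mod 2), set q = u² + v², and let h ∈ ℤ satisfy 2uv·h ≡ u² − v² (mod q). For a, b ∈ ℤ, let d₁ be the integer with 0 ≤ d₁ < q and a − h·b ≡ d₁ (mod q). Then {(2uv·a − (u² − v²)·b)/q} = {2uv·d₁/q} and {((u² − v²)·a + 2uv·b)/q} = {(u² − v²)·d₁/q}. -/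
lemma fract_eq_of_modeq_aux (q x y : ℤ) (hq : q ≠ 0) (hxy : x ≡ y [ZMOD q]) :
    Int.fract ((x : ℝ) / (q : ℝ)) = Int.fract ((y : ℝ) / (q : ℝ)) := by
  obtain ⟨k, hk⟩ := hxy.dvd
  have hx : x = y - q * k := by linarith
  have hq' : (q : ℝ) ≠ 0 := Int.cast_ne_zero.mpr hq
  have : (x : ℝ) / q = (y : ℝ) / q - (k : ℝ) := by
    rw [hx]; push_cast; field_simp
  rw [this, Int.fract_sub_intCast]

theorem fract_pythagorean (u v : ℤ) (hcop : IsCoprime u v) (hpar : ¬ u ≡ v [ZMOD 2])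
    (q : ℤ) (hq : q = u ^ 2 + v ^ 2)
    (h : ℤ) (hh : 2 * u * v * h ≡ u ^ 2 - v ^ 2 [ZMOD q])
    (a b d₁ : ℤ) (hd₁ : 0 ≤ d₁) (hd₁' : d₁ < q) (hd : a - h * b ≡ d₁ [ZMOD q]) :
    Int.fract (((2 * u * v * a - (u ^ 2 - v ^ 2) * b : ℤ) : ℝ) / (q : ℝ)) =
        Int.fract (((2 * u * v * d₁ : ℤ) : ℝ) / (q : ℝ)) ∧
      Int.fract ((((u ^ 2 - v ^ 2) * a + 2 * u * v * b : ℤ) : ℝ) / (q : ℝ)) =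
        Int.fract ((((u ^ 2 - v ^ 2) * d₁ : ℤ) : ℝ) / (q : ℝ)) := by
  have hqpos : 0 < q := lt_of_le_of_lt hd₁ hd₁'
  have hqne : q ≠ 0 := hqpos.ne'
  -- q is odd
  have hodd : ¬ (2 : ℤ) ∣ q := by
    rw [hq]; intro hdvd
    obtain ⟨t, ht⟩ := hdvd
    have h1 : Even (u ^ 2 + v ^ 2) := ⟨t, by linarith⟩
    rw [Int.even_add, Int.even_pow, Int.even_pow] at h1
    simp only [Int.even_iff] at h1
    have hu := Int.emod_two_eq u
    have hv := Int.emod_two_eq v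
    exact hpar (show u % 2 = v % 2 by omega)
  -- coprimality of 2uv and q
  have hcu : IsCoprime u q := by
    rw [hq]
    have : IsCoprime u (v ^ 2) := hcop.pow_right
    have h2 : IsCoprime u (v ^ 2 + u * u) := this.add_mul_left_right u
    convert h2 using 1; ring
  have hcv : IsCoprime v q := by
    rw [hq]
    have : IsCoprime v (u ^ 2) := hcop.symm.pow_right
    have h2 : IsCoprime v (u ^ 2 + v * v) := this.add_mul_left_right v
    convert h2 using 1; ring
  have hc2 : IsCoprime (2 : ℤ) q := (Int.prime_two.coprime_iff_not_dvd).mpr hodd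
  have hc2uv : IsCoprime (2 * u * v) q := (hc2.mul_left hcu).mul_left hcv
  -- q ∣ (u²−v²) − 2uvh
  obtain ⟨m, hm⟩ := hh.dvd
  -- (u²−v²)h + 2uv ≡ 0 mod q
  have hmul : q ∣ (2 * u * v) * ((u ^ 2 - v ^ 2) * h + 2 * u * v) := by
    refine ⟨q - (u ^ 2 - v ^ 2) * m, ?_⟩
    have h2 : u ^ 2 - v ^ 2 - 2 * u * v * h = q * m := hm
    rw [hq] at h2 ⊢
    linear_combination (-(u ^ 2 - v ^ 2)) * h2
  have hkey : q ∣ (u ^ 2 - v ^ 2) * h + 2 * u * v :=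
    (hc2uv.symm).dvd_of_dvd_mul_left hmul
  obtain ⟨k, hk⟩ := hd.dvd
  constructor
  · apply fract_eq_of_modeq_aux q _ _ hqne
    rw [Int.modEq_iff_dvd]
    refine ⟨2 * u * v * k + b * m, ?_⟩
    linear_combination 2 * u * v * hk + b * hm
  · apply fract_eq_of_modeq_aux q _ _ hqne
    obtain ⟨n, hn⟩ := hkey
    rw [Int.modEq_iff_dvd]
    refine ⟨(u ^ 2 - v ^ 2) * k - b * n, ?_⟩
    linear_combination (u ^ 2 - v ^ 2) * hk - b * hn
end
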